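/- arXiv:1903.08441 — 9 statements merged into one kernel-verified Lean document; each statement's English description precedes it below -/
import Mathlib

section
/- Let K be a field and let a(x) ∈ K[x₁,...,xₙ] have an irreducible factor of multiplicity 1 over the algebraic closure of K. Let c(x,y) = Σᵢ cᵢ(x)yⁱ ∈ K[x₁,...,xₙ][y] with leading coefficient c_d(x), and b(x) ∈ K[x₁,...,xₙ] with gcd(a(x), c_d(x)·b(x)) = 1. Then if p(x,y) = a(x)·c(x,y) + b(x) is primitive as a polynomial in y over K[x₁,...,xₙ], it is absolutely irreducible (irreducible over the algebraic closure of K). -/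
open Polynomial

section Descent

variable {K L : Type*} [Field K] [Field L] [Algebra K L] {σ : Type*}

/-- Coefficientwise application of a `K`-linear functional `L →ₗ[K] K`. -/
noncomputable def coordMvPoly (l : L →ₗ[K] K) (t : MvPolynomial σ L) : MvPolynomial σ K :=
  AddMonoidAlgebra.ofCoeff (Finsupp.mapRange l l.map_zero (AddMonoidAlgebra.coeff t))

lemma coeff_coordMvPoly (l : L →ₗ[K] K) (t : MvPolynomial σ L) (m : σ →₀ ℕ) :
    (coordMvPoly l t).coeff m = l (t.coeff m) := rfl

lemma coordMvPoly_map_mul (l : L →ₗ[K] K) (g : MvPolynomial σ K) (t : MvPolynomial σ L) :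
    coordMvPoly l (MvPolynomial.map (algebraMap K L) g * t) = g * coordMvPoly l t := by
  classical
  apply MvPolynomial.ext
  intro m
  rw [coeff_coordMvPoly, MvPolynomial.coeff_mul, MvPolynomial.coeff_mul, map_sum]
  refine Finset.sum_congr rfl fun x _ => ?_
  rw [MvPolynomial.coeff_map, coeff_coordMvPoly, ← Algebra.smul_def, map_smul, smul_eq_mul]

lemma coordMvPoly_repr {ι : Type*} [DecidableEq ι] (b : Module.Basis ι K L) (t : MvPolynomial σ L) :
    t = ∑ i ∈ t.support.biUnion (fun m => (b.repr (t.coeff m)).support),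
      MvPolynomial.C (b i) *
        MvPolynomial.map (algebraMap K L) (coordMvPoly (b.coord i) t) := by
  classical
  apply MvPolynomial.ext
  intro m
  set S := t.support.biUnion (fun m => (b.repr (t.coeff m)).support) with hS
  have hsub : (b.repr (t.coeff m)).support ⊆ S := by
    by_cases hm : m ∈ t.support
    · exact Finset.subset_biUnion_of_mem (fun m => (b.repr (t.coeff m)).support) hm
    · rw [MvPolynomial.notMem_support_iff.mp hm]
      simp
  rw [MvPolynomial.coeff_sum]
  have hterm : ∀ i ∈ S,
      (MvPolynomial.C (b i) *
        MvPolynomial.map (algebraMap K L) (coordMvPoly (b.coord i) t)).coeff m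
      = (b.repr (t.coeff m)) i • b i := by
    intro i _
    rw [MvPolynomial.coeff_C_mul, MvPolynomial.coeff_map, coeff_coordMvPoly, b.coord_apply,
      mul_comm, ← Algebra.smul_def]
  refine Eq.symm ?_
  calc ∑ i ∈ S, (MvPolynomial.C (b i) *
        MvPolynomial.map (algebraMap K L) (coordMvPoly (b.coord i) t)).coeff m
      = ∑ i ∈ S, (b.repr (t.coeff m)) i • b i := Finset.sum_congr rfl hterm
    _ = ∑ i ∈ (b.repr (t.coeff m)).support, (b.repr (t.coeff m)) i • b i :=
        (Finset.sum_subset hsub (fun i _ hi => by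
          rw [Finsupp.notMem_support_iff.mp hi, zero_smul])).symm
    _ = t.coeff m := by
        have := b.linearCombination_repr (t.coeff m)
        rwa [Finsupp.linearCombination_apply, Finsupp.sum] at this

/-- Key descent step: if `π` is prime in `K[x]` and `π ∤ f`, then the image of `π`
is a non-zero-divisor modulo the image of `π` times anything, i.e. `π ∣ f·h ⇒ π ∣ h`
over `L`. -/
lemma map_dvd_of_map_dvd_map_mul {π f : MvPolynomial σ K} (hπ : Prime π) (hf : ¬ π ∣ f)
    {h : MvPolynomial σ L}
    (hd : MvPolynomial.map (algebraMap K L) π ∣ MvPolynomial.map (algebraMap K L) f * h) :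
    MvPolynomial.map (algebraMap K L) π ∣ h := by
  classical
  obtain ⟨u, hu⟩ := hd
  let b := Module.Basis.ofVectorSpace K L
  classical
  have key : ∀ l : L →ₗ[K] K, π ∣ coordMvPoly l h := by
    intro l
    have heq : f * coordMvPoly l h = π * coordMvPoly l u := by
      rw [← coordMvPoly_map_mul, ← coordMvPoly_map_mul, ← hu]
    have : π ∣ f * coordMvPoly l h := ⟨_, heq⟩
    exact (hπ.dvd_or_dvd this).resolve_left hf
  rw [coordMvPoly_repr b h]
  apply Finset.dvd_sum
  intro i _
  obtain ⟨v, hv⟩ := key (b.coord i)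
  rw [hv, map_mul]
  exact ((dvd_mul_right _ _).mul_left _)

/-- If `π` is prime in `K[x]`, `π ∤ f`, then the images of `π` and `f` in `L[x]` have no
common non-unit divisor. -/
lemma isUnit_of_dvd_map_pair {π f : MvPolynomial σ K} (hπ : Prime π) (hf : ¬ π ∣ f)
    {s : MvPolynomial σ L} (h1 : s ∣ MvPolynomial.map (algebraMap K L) π)
    (h2 : s ∣ MvPolynomial.map (algebraMap K L) f) : IsUnit s := by
  obtain ⟨t, ht⟩ := h1
  obtain ⟨w, hw⟩ := h2
  have hd : MvPolynomial.map (algebraMap K L) π ∣ MvPolynomial.map (algebraMap K L) f * t := by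
    refine ⟨w, ?_⟩
    rw [hw, ht]; ring
  obtain ⟨t', ht'⟩ := map_dvd_of_map_dvd_map_mul hπ hf hd
  have hπ0 : MvPolynomial.map (algebraMap K L) π ≠ 0 := by
    intro h0
    apply hπ.ne_zero
    exact MvPolynomial.map_injective _ (algebraMap K L).injective (by rw [h0, map_zero])
  rw [ht'] at ht
  have heq : MvPolynomial.map (algebraMap K L) π * 1
      = MvPolynomial.map (algebraMap K L) π * (s * t') := by
    conv_lhs => rw [mul_one, ht]
    ring
  exact IsUnit.of_mul_eq_one t' (mul_left_cancel₀ hπ0 heq).symm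

/-- A prime of `L[x]` dividing the image of a nonzero `a ∈ K[x]` divides the image of some
prime factor of `a`. -/
lemma exists_prime_factor_of_dvd_map {aK : MvPolynomial σ K} (ha0 : aK ≠ 0)
    {q : MvPolynomial σ L} (hq : Prime q)
    (hdvd : q ∣ MvPolynomial.map (algebraMap K L) aK) :
    ∃ π : MvPolynomial σ K, Prime π ∧ π ∣ aK ∧ q ∣ MvPolynomial.map (algebraMap K L) π := by
  obtain ⟨fs, hfs, u, hu⟩ := UniqueFactorizationMonoid.exists_prime_factors aK ha0
  have hdvd' : q ∣ MvPolynomial.map (algebraMap K L) fs.prod := by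
    have hunit : IsUnit (MvPolynomial.map (algebraMap K L) (u : MvPolynomial σ K)) :=
      u.isUnit.map _
    obtain ⟨w, hw⟩ := hunit.exists_right_inv
    have h1 : q ∣ MvPolynomial.map (algebraMap K L) fs.prod *
        MvPolynomial.map (algebraMap K L) (u : MvPolynomial σ K) := by
      rw [← map_mul, hu]; exact hdvd
    have h2 := h1.mul_right w
    rwa [mul_assoc, hw, mul_one] at h2
  rw [← Multiset.prod_hom fs (MvPolynomial.map (algebraMap K L))] at hdvd'
  obtain ⟨x, hx, hqx⟩ := hq.exists_mem_multiset_dvd hdvd'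
  obtain ⟨π, hπfs, rfl⟩ := Multiset.mem_map.mp hx
  refine ⟨π, hfs π hπfs, ?_, hqx⟩
  calc π ∣ fs.prod := Multiset.dvd_prod hπfs
    _ ∣ aK := Dvd.intro _ hu

end Descent

/-- Proposition 2.1 (Eisenstein application): if `a` has an irreducible factor of
multiplicity 1 over the algebraic closure, `gcd(a, c_d b) = 1`, and
`p = a·c + b` is primitive in `y`, then `p` is absolutely irreducible. -/
theorem stmt0 {K : Type*} [Field K] {n : ℕ}
    (a b : MvPolynomial (Fin n) K) (c : Polynomial (MvPolynomial (Fin n) K))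
    (hc : 0 < c.natDegree)
    (ha : ∃ q : MvPolynomial (Fin n) (AlgebraicClosure K), Irreducible q ∧
      q ∣ MvPolynomial.map (algebraMap K (AlgebraicClosure K)) a ∧
      ¬ q ^ 2 ∣ MvPolynomial.map (algebraMap K (AlgebraicClosure K)) a)
    (hgcd : IsRelPrime a (c.leadingCoeff * b))
    (hprim : (Polynomial.C a * c + Polynomial.C b).IsPrimitive) :
    Irreducible ((Polynomial.C a * c + Polynomial.C b).map
      (MvPolynomial.map (algebraMap K (AlgebraicClosure K)))) := by
  classical
  set L := AlgebraicClosure K with hL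
  set Φ := MvPolynomial.map (algebraMap K L) with hΦ
  obtain ⟨q, hqirr, hqa, hqa2⟩ := ha
  have hq : Prime q := UniqueFactorizationMonoid.irreducible_iff_prime.mp hqirr
  have hΦinj : Function.Injective Φ :=
    MvPolynomial.map_injective _ (algebraMap K L).injective
  have ha0 : a ≠ 0 := by
    rintro rfl
    exact hqa2 (by rw [map_zero]; exact dvd_zero _)
  have hc0 : c ≠ 0 := fun h => by simp [h] at hc
  have hcd0 : c.leadingCoeff ≠ 0 := leadingCoeff_ne_zero.mpr hc0
  -- q does not divide Φ (c.leadingCoeff * b)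
  have hqcb : ¬ q ∣ Φ (c.leadingCoeff * b) := by
    intro hdvd
    obtain ⟨π, hπ, hπa, hqπ⟩ := exists_prime_factor_of_dvd_map ha0 hq hqa
    have hπcb : ¬ π ∣ c.leadingCoeff * b := fun hd => hπ.not_unit (hgcd hπa hd)
    exact hq.not_unit (isUnit_of_dvd_map_pair hπ hπcb hqπ hdvd)
  have hqb : ¬ q ∣ Φ b := by
    intro hd
    exact hqcb (by rw [map_mul]; exact hd.mul_left _)
  have hqcd : ¬ q ∣ Φ c.leadingCoeff := by
    intro hd
    exact hqcb (by rw [map_mul]; exact hd.mul_right _)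
  set p := Polynomial.C a * c + Polynomial.C b with hp
  set P := p.map Φ with hP
  have hpcoeff : ∀ k, p.coeff k = a * c.coeff k + (if k = 0 then b else 0) := by
    intro k
    rw [hp, coeff_add, coeff_C_mul, coeff_C]
  have hpdeg : p.natDegree = c.natDegree := by
    rw [hp, natDegree_add_C, natDegree_C_mul ha0]
  have hPdeg : P.natDegree = c.natDegree := by
    rw [hP, natDegree_map_eq_of_injective hΦinj, hpdeg]
  have hplead : p.leadingCoeff = a * c.leadingCoeff := by
    rw [Polynomial.leadingCoeff, hpdeg, hpcoeff, if_neg hc.ne', add_zero, Polynomial.leadingCoeff]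
  have hP0 : P.coeff 0 = Φ (a * c.coeff 0 + b) := by
    rw [hP, coeff_map, hpcoeff, if_pos rfl]
  have hq_not_P0 : ¬ q ∣ P.coeff 0 := by
    rw [hP0, map_add, map_mul]
    intro hd
    exact hqb ((dvd_add_right ((hqa.mul_right _))).mp hd)
  have hP0ne : P.coeff 0 ≠ 0 := fun h => hq_not_P0 (h ▸ dvd_zero q)
  have hPne : P ≠ 0 := fun h => hP0ne (by rw [h, coeff_zero])
  have hPlead : P.leadingCoeff = Φ (a * c.leadingCoeff) := by
    rw [hP, leadingCoeff_map_of_injective hΦinj, hplead]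
  have hq2P : ¬ q ^ 2 ∣ P.leadingCoeff := by
    rw [hPlead, map_mul]
    intro hd
    apply hqa2
    obtain ⟨a1, ha1⟩ := hqa
    have hd' : q * q ∣ q * (a1 * Φ c.leadingCoeff) := by
      have heq : Φ a * Φ c.leadingCoeff = q * (a1 * Φ c.leadingCoeff) := by rw [ha1]; ring
      rw [← heq, ← pow_two]; exact hd
    have h2 : q ∣ a1 * Φ c.leadingCoeff := (mul_dvd_mul_iff_left hq.ne_zero).mp hd'
    have h3 : q ∣ a1 := (hq.dvd_or_dvd h2).resolve_right hqcd
    rw [ha1, pow_two]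
    exact mul_dvd_mul dvd_rfl h3
  -- primitivity of P
  have hPprim : P.IsPrimitive := by
    intro r hr
    by_contra hru
    have hr0 : r ≠ 0 := by
      rintro rfl
      rw [map_zero] at hr
      exact hPne (zero_dvd_iff.mp hr)
    obtain ⟨q'', hq''irr, hq''r⟩ := WfDvdMonoid.exists_irreducible_factor hru hr0
    have hq'' : Prime q'' := UniqueFactorizationMonoid.irreducible_iff_prime.mp hq''irr
    have hcoeffs : ∀ k, q'' ∣ Φ (p.coeff k) := by
      intro k
      have : Polynomial.C q'' ∣ P := (Polynomial.C_dvd_iff_dvd_coeff q'' P).mpr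
        (fun i => hq''r.trans ((Polynomial.C_dvd_iff_dvd_coeff r P).mp hr i))
      have := (Polynomial.C_dvd_iff_dvd_coeff q'' P).mp this k
      rwa [hP, coeff_map] at this
    have hlne : a * c.leadingCoeff ≠ 0 := mul_ne_zero ha0 hcd0
    have hql : q'' ∣ Φ (a * c.leadingCoeff) := by
      have := hcoeffs p.natDegree
      rwa [← Polynomial.leadingCoeff, hplead] at this
    obtain ⟨π, hπ, _, hq''π⟩ := exists_prime_factor_of_dvd_map hlne hq'' hql
    have hall : ∀ k, π ∣ p.coeff k := by
      intro k
      by_contra hnd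
      exact hq''.not_unit (isUnit_of_dvd_map_pair hπ hnd hq''π (hcoeffs k))
    have : IsUnit π := hprim π ((Polynomial.C_dvd_iff_dvd_coeff π p).mpr hall)
    exact hπ.not_unit this
  -- Eisenstein on the reverse polynomial
  have hntP : P.natTrailingDegree = 0 := natTrailingDegree_eq_zero.mpr (Or.inr hP0ne)
  set Q := P.reverse with hQ
  have hQne : Q ≠ 0 := fun h => hPne (reverse_eq_zero.mp h)
  have hQdeg : Q.natDegree = P.natDegree := by
    rw [hQ, reverse_natDegree, hntP, Nat.sub_zero]
  have hQdegpos : 0 < Q.natDegree := by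
    rw [hQdeg, hPdeg]; exact hc
  have hIprime : (Ideal.span {q} : Ideal (MvPolynomial (Fin n) L)).IsPrime :=
    (Ideal.span_singleton_prime hq.ne_zero).mpr hq
  have hcoeffP_mid : ∀ j, j ≠ 0 → q ∣ P.coeff j := by
    intro j hj
    rw [hP, coeff_map, hpcoeff, if_neg hj, add_zero, map_mul]
    exact hqa.mul_right _
  have hQirr : Irreducible Q := by
    apply Polynomial.irreducible_of_eisenstein_criterion hIprime
    · rw [hQ, reverse_leadingCoeff, Polynomial.trailingCoeff, hntP, Ideal.mem_span_singleton]
      exact hq_not_P0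
    · intro k hk
      have hk' : k < Q.natDegree := Polynomial.coe_lt_degree.mp hk
      rw [hQ, coeff_reverse, Ideal.mem_span_singleton]
      have hkle : k ≤ P.natDegree := le_of_lt (by rw [← hQdeg]; exact hk')
      rw [revAt_le hkle]
      apply hcoeffP_mid
      have : k < P.natDegree := by rw [← hQdeg]; exact hk'
      omega
    · rw [Polynomial.degree_eq_natDegree hQne]
      exact_mod_cast hQdegpos
    · rw [hQ, coeff_zero_reverse, Ideal.span_singleton_pow, Ideal.mem_span_singleton]
      exact hq2P
    · intro r hr
      apply hPprim r
      rw [Polynomial.C_dvd_iff_dvd_coeff] at hr ⊢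
      intro i
      have := hr (revAt P.natDegree i)
      rwa [hQ, coeff_reverse, revAt_invol] at this
  -- from irreducibility of the reverse to irreducibility of P
  show Irreducible P
  constructor
  · intro hPu
    have := natDegree_eq_zero_of_isUnit hPu
    rw [hPdeg] at this
    omega
  · intro u v huv
    have hu0 : u ≠ 0 := fun h => hPne (by rw [huv, h, zero_mul])
    have hv0 : v ≠ 0 := fun h => hPne (by rw [huv, h, mul_zero])
    have hrev : Q = u.reverse * v.reverse := by
      rw [hQ, huv, reverse_mul_of_domain]
    have hu00 : u.coeff 0 ≠ 0 := by
      have := hP0ne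
      rw [huv, mul_coeff_zero] at this
      exact left_ne_zero_of_mul this
    have hv00 : v.coeff 0 ≠ 0 := by
      have := hP0ne
      rw [huv, mul_coeff_zero] at this
      exact right_ne_zero_of_mul this
    rcases hQirr.isUnit_or_isUnit hrev with h | h
    · left
      have hnt : u.natTrailingDegree = 0 := natTrailingDegree_eq_zero.mpr (Or.inr hu00)
      have hrd : u.reverse.natDegree = 0 := natDegree_eq_zero_of_isUnit h
      have hud : u.natDegree = 0 := by
        have := u.natDegree_eq_reverse_natDegree_add_natTrailingDegree
        omega
      have hueq : u = Polynomial.C (u.coeff 0) := eq_C_of_natDegree_eq_zero hud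
      rw [hueq] at h ⊢
      rwa [reverse_C] at h
    · right
      have hnt : v.natTrailingDegree = 0 := natTrailingDegree_eq_zero.mpr (Or.inr hv00)
      have hrd : v.reverse.natDegree = 0 := natDegree_eq_zero_of_isUnit h
      have hvd : v.natDegree = 0 := by
        have := v.natDegree_eq_reverse_natDegree_add_natTrailingDegree
        omega
      have hveq : v = Polynomial.C (v.coeff 0) := eq_C_of_natDegree_eq_zero hvd
      rw [hveq] at h ⊢
      rwa [reverse_C] at h
end

section
/- Let a(x) ∈ K[x₁,...,xₙ] be NHIP and let p(x,y) = a(x)·c(x,y) + b(x) ∈ K[x₁,...,xₙ][y] be primitive, where c(x,y) = Σᵢ₌₀^d cᵢ(x)yⁱ and gcd(a(x), c_d(x)·b(x)) = 1. Then p(x,y) is HIP: for every (n+1)-tuple of non-constant univariate polynomials h₁,...,hₙ,g over K, the polynomial p(h₁(x₁),...,hₙ(xₙ), g(y)) is irreducible over K. -/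
/-- The substitution `xᵢ ↦ hᵢ(xᵢ)` on multivariate polynomials. -/
noncomputable def substVars {K : Type*} [Field K] {n : ℕ} (h : Fin n → Polynomial K) :
    MvPolynomial (Fin n) K →+* MvPolynomial (Fin n) K :=
  (MvPolynomial.aeval fun i => Polynomial.aeval (MvPolynomial.X i) (h i)).toRingHom

/-- The substitution `xᵢ ↦ hᵢ(xᵢ)`, `y ↦ g(y)` on `p ∈ K[x₁,…,xₙ][y]`. -/
noncomputable def substAll {K : Type*} [Field K] {n : ℕ} (h : Fin n → Polynomial K)
    (g : Polynomial K) (p : Polynomial (MvPolynomial (Fin n) K)) :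
    Polynomial (MvPolynomial (Fin n) K) :=
  (p.map (substVars h)).comp (g.map MvPolynomial.C)

/-- `a` is NHIP: every substitution of non-constant univariate polynomials yields a
polynomial with an irreducible factor of multiplicity 1 over the algebraic closure. -/
def IsNHIP {K : Type*} [Field K] {n : ℕ} (a : MvPolynomial (Fin n) K) : Prop :=
  ∀ h : Fin n → Polynomial K, (∀ i, 0 < (h i).natDegree) →
    ∃ q : MvPolynomial (Fin n) (AlgebraicClosure K), Irreducible q ∧
      q ∣ MvPolynomial.map (algebraMap K (AlgebraicClosure K)) (substVars h a) ∧
      ¬ q ^ 2 ∣ MvPolynomial.map (algebraMap K (AlgebraicClosure K)) (substVars h a)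

namespace NHIPProof

variable {K : Type*} [Field K]

theorem substVars_C {n : ℕ} (h : Fin n → Polynomial K) (k : K) :
    substVars h (MvPolynomial.C k) = MvPolynomial.C k := by
  simp [substVars, MvPolynomial.algebraMap_eq]

theorem substVars_X {n : ℕ} (h : Fin n → Polynomial K) (i : Fin n) :
    substVars h (MvPolynomial.X i) = Polynomial.aeval (MvPolynomial.X i) (h i) := by
  simp [substVars]

theorem rename_substVars {n : ℕ} (π : Equiv.Perm (Fin n)) (h : Fin n → Polynomial K)
    (u : MvPolynomial (Fin n) K) :
    MvPolynomial.rename π (substVars h u)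
      = substVars (h ∘ π.symm) (MvPolynomial.rename π u) := by
  induction u using MvPolynomial.induction_on with
  | C k => simp [substVars_C]
  | add u v hu hv => simp only [map_add, hu, hv]
  | mul_X u i hu =>
      simp only [map_mul, hu, substVars_X, MvPolynomial.rename_X]
      congr 1
      rw [← Polynomial.aeval_algHom_apply (MvPolynomial.rename (⇑π)) (MvPolynomial.X i) (h i),
        MvPolynomial.rename_X]
      simp

theorem aeval_X_eq_map {S : Type*} [CommSemiring S] [Algebra K S] (p : Polynomial K) :
    Polynomial.aeval (Polynomial.X : Polynomial S) p = p.map (algebraMap K S) := by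
  induction p using Polynomial.induction_on' with
  | add p q hp hq => simp [hp, hq]
  | monomial n k =>
      simp [Polynomial.aeval_monomial, Polynomial.map_monomial, Polynomial.algebraMap_apply,
        Polynomial.C_mul_X_pow_eq_monomial]

theorem aeval_C_eq {S : Type*} [CommSemiring S] [Algebra K S] (s : S) (p : Polynomial K) :
    Polynomial.aeval (Polynomial.C s) p = Polynomial.C (Polynomial.aeval s p) := by
  induction p using Polynomial.induction_on' with
  | add p q hp hq => simp [hp, hq]
  | monomial n k =>
      simp [Polynomial.aeval_monomial, Polynomial.algebraMap_apply, ← map_pow, ← map_mul]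

theorem finSuccEquiv_substVars {m : ℕ} (h : Fin (m + 1) → Polynomial K)
    (u : MvPolynomial (Fin (m + 1)) K) :
    MvPolynomial.finSuccEquiv K m (substVars h u)
      = ((MvPolynomial.finSuccEquiv K m u).map (substVars fun j => h j.succ)).comp
          ((h 0).map MvPolynomial.C) := by
  induction u using MvPolynomial.induction_on with
  | C k =>
      simp [substVars_C, MvPolynomial.finSuccEquiv_apply, substVars_C]
  | add u v hu hv => simp only [map_add, Polynomial.map_add, Polynomial.add_comp, hu, hv]
  | mul_X u i hu =>
      simp only [map_mul, Polynomial.map_mul, Polynomial.mul_comp, hu]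
      refine congrArg (HMul.hMul _) ?_
      rw [substVars_X,
        ← Polynomial.aeval_algHom_apply (MvPolynomial.finSuccEquiv K m)
          (MvPolynomial.X i) (h i)]
      cases i using Fin.cases with
      | zero =>
          rw [MvPolynomial.finSuccEquiv_X_zero, aeval_X_eq_map]
          simp [MvPolynomial.algebraMap_eq]
      | succ j =>
          rw [MvPolynomial.finSuccEquiv_X_succ, aeval_C_eq]
          simp [substVars_X]

theorem substVars_injective {n : ℕ} (h : Fin n → Polynomial K)
    (hh : ∀ i, 0 < (h i).natDegree) : Function.Injective (substVars h) := by
  induction n with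
  | zero =>
      have hid : ∀ x, substVars h x = x := by
        intro x
        induction x using MvPolynomial.induction_on with
        | C k => exact substVars_C h k
        | add u v hu hv => rw [map_add, hu, hv]
        | mul_X u i hu => exact i.elim0
      intro x y hxy
      rwa [hid, hid] at hxy
  | succ m ih =>
      have hinj : Function.Injective (substVars fun j : Fin m => h j.succ) :=
        ih _ (fun i => hh i.succ)
      rw [injective_iff_map_eq_zero]
      intro u hu
      have h2 : ((MvPolynomial.finSuccEquiv K m u).map
            (substVars fun j => h j.succ)).comp ((h 0).map MvPolynomial.C) = 0 := by
        rw [← finSuccEquiv_substVars, hu, map_zero]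
      set W : Polynomial (MvPolynomial (Fin m) K) := (h 0).map MvPolynomial.C with hW
      have hWdeg : W.natDegree = (h 0).natDegree :=
        Polynomial.natDegree_map_eq_of_injective (MvPolynomial.C_injective (Fin m) K) _
      by_contra hu0
      have hU : (MvPolynomial.finSuccEquiv K m u).map (substVars fun j => h j.succ) ≠ 0 := by
        intro e
        rw [Polynomial.map_eq_zero_iff hinj] at e
        exact hu0 (by simpa using congrArg (MvPolynomial.finSuccEquiv K m).symm e)
      have hW0 : W ≠ 0 := by
        intro e
        have h00 : (h 0) = 0 := by
          rwa [Polynomial.map_eq_zero_iff (MvPolynomial.C_injective (Fin m) K)] at e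
        have := hh 0
        rw [h00] at this
        simp at this
      have hlc : (((MvPolynomial.finSuccEquiv K m u).map
            (substVars fun j => h j.succ)).comp W).leadingCoeff ≠ 0 := by
        rw [Polynomial.leadingCoeff_comp (by rw [hWdeg]; exact (hh 0).ne' : W.natDegree ≠ 0)]
        exact mul_ne_zero (Polynomial.leadingCoeff_ne_zero.mpr hU)
          (pow_ne_zero _ (Polynomial.leadingCoeff_ne_zero.mpr hW0))
      rw [h2] at hlc
      simp at hlc

theorem bezout {R : Type*} [CommRing R] [IsDomain R] [UniqueFactorizationMonoid R]
    {k : ℕ} (V : Fin k → Polynomial R)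
    (hV : ∀ r : Polynomial R, (∀ j, r ∣ V j) → IsUnit r) :
    ∃ (β : Fin k → Polynomial R) (m₀ : R), m₀ ≠ 0 ∧ ∑ j, β j * V j = Polynomial.C m₀ := by
  classical
  letI : NormalizationMonoid R :=
    (UniqueFactorizationMonoid.normalizationMonoid : StrongNormalizationMonoid R).toNormalizationMonoid
  letI : NormalizedGCDMonoid R := UniqueFactorizationMonoid.toNormalizedGCDMonoid R
  set F := FractionRing R
  have hmapinj : Function.Injective (Polynomial.map (algebraMap R F)) :=
    Polynomial.map_injective _ (IsFractionRing.injective R F)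
  set I : Ideal (Polynomial F) :=
    Ideal.span (Set.range fun j => (V j).map (algebraMap R F)) with hI
  by_cases htop : I = ⊤
  · have h1 : (1 : Polynomial F) ∈ I := htop ▸ Submodule.mem_top
    rw [hI, Ideal.mem_span_range_iff_exists_fun] at h1
    obtain ⟨α, hα⟩ := h1
    choose d hd using fun j =>
      IsLocalization.integerNormalization_map_to_map (nonZeroDivisors R) (α j)
    refine ⟨fun j => Polynomial.C (∏ l ∈ Finset.univ.erase j, (d l : R)) *
        IsLocalization.integerNormalization (nonZeroDivisors R) (α j),
      ∏ j, (d j : R), ?_, ?_⟩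
    · rw [Finset.prod_ne_zero_iff]
      exact fun j _ => mem_nonZeroDivisors_iff_ne_zero.mp (d j).2
    · apply hmapinj
      rw [Polynomial.map_sum, Polynomial.map_C]
      have key : ∀ j : Fin k,
          Polynomial.map (algebraMap R F)
            (Polynomial.C (∏ l ∈ Finset.univ.erase j, (d l : R)) *
              IsLocalization.integerNormalization (nonZeroDivisors R) (α j) * V j)
          = Polynomial.C (algebraMap R F (∏ j, (d j : R))) *
              (α j * (V j).map (algebraMap R F)) := by
        intro j
        rw [Polynomial.map_mul, Polynomial.map_mul, Polynomial.map_C, hd j]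
        have hsm : ((d j : R) • α j) = Polynomial.C (algebraMap R F (d j : R)) * α j := by
          rw [Algebra.smul_def, Polynomial.algebraMap_apply]
        rw [hsm]
        rw [← mul_assoc, ← mul_assoc, ← Polynomial.C_mul, ← map_mul,
          Finset.prod_erase_mul _ _ (Finset.mem_univ j)]
      rw [Finset.sum_congr rfl (fun j _ => key j), ← Finset.mul_sum, hα, mul_one]
  · obtain ⟨G, hG⟩ := (IsPrincipalIdealRing.principal I).principal
    have hmem : ∀ j, G ∣ (V j).map (algebraMap R F) := by
      intro j
      have h1 : (V j).map (algebraMap R F) ∈ I := Ideal.subset_span ⟨j, rfl⟩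
      rw [hG] at h1
      exact Ideal.mem_span_singleton.mp h1
    have hGnu : ¬IsUnit G := by
      intro hGu
      apply htop
      rw [hG]
      exact Ideal.span_singleton_eq_top.mpr hGu
    have hne : ∃ j, V j ≠ 0 := by
      by_contra hall
      push_neg at hall
      have hXu := hV Polynomial.X (fun j => by rw [hall j]; exact dvd_zero _)
      have := Polynomial.natDegree_eq_zero_of_isUnit hXu
      simp [Polynomial.natDegree_X] at this
    obtain ⟨j₀, hj₀⟩ := hne
    have hG0 : G ≠ 0 := by
      rintro rfl
      exact hj₀ (hmapinj (by simpa using (zero_dvd_iff.mp (hmem j₀))))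
    have hGdeg : G.natDegree ≠ 0 := by
      intro hdeg
      apply hGnu
      rw [Polynomial.eq_C_of_natDegree_eq_zero hdeg]
      refine Polynomial.isUnit_C.mpr (isUnit_iff_ne_zero.mpr ?_)
      intro e
      apply hG0
      rw [Polynomial.eq_C_of_natDegree_eq_zero hdeg, e, map_zero]
    -- pull G back to a primitive polynomial over R
    have hinjF := IsFractionRing.injective R F
    have halg : ∀ x : R, x ≠ 0 → algebraMap R F x ≠ 0 := fun x hx hc =>
      hx (hinjF (by rw [hc, map_zero]))
    obtain ⟨dG, hdG⟩ := IsLocalization.integerNormalization_map_to_map (nonZeroDivisors R) G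
    set g₁ := IsLocalization.integerNormalization (nonZeroDivisors R) G with hg₁
    have hg₁0 : g₁ ≠ 0 := by
      rintro e
      rw [e, Polynomial.map_zero] at hdG
      have : G = 0 := by
        have hd0 : Polynomial.C (algebraMap R F (dG : R)) ≠ (0 : Polynomial F) := by
          rw [Ne, Polynomial.C_eq_zero]
          exact halg _ (mem_nonZeroDivisors_iff_ne_zero.mp dG.2)
        have h2 := hdG.symm
        rw [Algebra.smul_def, Polynomial.algebraMap_apply] at h2
        exact (mul_eq_zero.mp h2).resolve_left hd0
      exact hG0 this
    set g := g₁.primPart with hgdef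
    have hgprim : g.IsPrimitive := Polynomial.isPrimitive_primPart g₁
    have hgcontent0 : g₁.content ≠ 0 := fun e => hg₁0 (Polynomial.content_eq_zero_iff.mp e)
    have hassoc : Associated G (Polynomial.map (algebraMap R F) g) := by
      have e1 : Polynomial.C (algebraMap R F (dG : R)) * G
          = Polynomial.C (algebraMap R F g₁.content) *
              Polynomial.map (algebraMap R F) g := by
        have : Polynomial.map (algebraMap R F) g₁
            = Polynomial.C (algebraMap R F g₁.content) * Polynomial.map (algebraMap R F) g := by
          conv_lhs => rw [g₁.eq_C_content_mul_primPart]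
          rw [Polynomial.map_mul, Polynomial.map_C]
        rw [← this, hdG, Algebra.smul_def, Polynomial.algebraMap_apply]
      have hu1 : IsUnit (Polynomial.C (algebraMap R F (dG : R))) :=
        Polynomial.isUnit_C.mpr (isUnit_iff_ne_zero.mpr
          (halg _ (mem_nonZeroDivisors_iff_ne_zero.mp dG.2)))
      have hu2 : IsUnit (Polynomial.C (algebraMap R F g₁.content)) :=
        Polynomial.isUnit_C.mpr (isUnit_iff_ne_zero.mpr (halg _ hgcontent0))
      have a1 : Associated G (Polynomial.C (algebraMap R F (dG : R)) * G) :=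
        (associated_unit_mul_left _ _ hu1).symm
      rw [e1] at a1
      exact a1.trans (associated_unit_mul_left _ _ hu2)
    have hgdvd : ∀ j, g ∣ V j := by
      intro j
      by_cases hVj : V j = 0
      · rw [hVj]; exact dvd_zero _
      have h1 : Polynomial.map (algebraMap R F) g ∣ Polynomial.map (algebraMap R F) (V j) :=
        hassoc.symm.dvd.trans (hmem j)
      have hVcont : (V j).content ≠ 0 := fun e => hVj (Polynomial.content_eq_zero_iff.mp e)
      have h2 : Polynomial.map (algebraMap R F) g ∣
          Polynomial.map (algebraMap R F) (V j).primPart := by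
        have e1 : Polynomial.map (algebraMap R F) (V j)
            = Polynomial.C (algebraMap R F (V j).content) *
                Polynomial.map (algebraMap R F) (V j).primPart := by
          conv_lhs => rw [(V j).eq_C_content_mul_primPart]
          rw [Polynomial.map_mul, Polynomial.map_C]
        have hu : IsUnit (Polynomial.C (algebraMap R F (V j).content)) :=
          Polynomial.isUnit_C.mpr (isUnit_iff_ne_zero.mpr (halg _ hVcont))
        rw [e1] at h1
        exact (IsUnit.dvd_mul_left hu).mp h1
      exact (hgprim.dvd_of_fraction_map_dvd_fraction_map
        h2).trans (V j).primPart_dvd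
    exfalso
    apply hGdeg
    have hgu : IsUnit g := hV g hgdvd
    have hdg : (Polynomial.map (algebraMap R F) g).natDegree = 0 := by
      rw [Polynomial.natDegree_map_eq_of_injective (IsFractionRing.injective R F)]
      exact Polynomial.natDegree_eq_zero_of_isUnit hgu
    obtain ⟨u, hu⟩ := hassoc
    rw [← hu, Polynomial.natDegree_mul hG0 (Units.ne_zero u),
      Polynomial.natDegree_eq_zero_of_isUnit u.isUnit, Nat.add_zero] at hdg
    exact hdg

theorem substVars_eq_id (h : Fin 0 → Polynomial K) (x : MvPolynomial (Fin 0) K) :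
    substVars h x = x := by
  induction x using MvPolynomial.induction_on with
  | C k => exact substVars_C h k
  | add u v hu hv => rw [map_add, hu, hv]
  | mul_X u i hu => exact i.elim0

theorem key {n : ℕ} (h : Fin n → Polynomial K) (hh : ∀ i, 0 < (h i).natDegree)
    {k : ℕ} (f : Fin k → MvPolynomial (Fin n) K)
    (hf : ∀ r, (∀ j, r ∣ f j) → IsUnit r)
    (r : MvPolynomial (Fin n) K) (hr : ∀ j, r ∣ substVars h (f j)) : IsUnit r := by
  cases n with
  | zero =>
      exact hf r (fun j => by
        have := hr j
        rwa [substVars_eq_id] at this)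
  | succ m =>
      by_contra hru
      have hr0 : r ≠ 0 := by
        rintro rfl
        have hf0 : ∀ j, f j = 0 := fun j => substVars_injective h hh
          (by rw [map_zero]; exact (zero_dvd_iff.mp (hr j)))
        exact hru (hf 0 fun j => by rw [hf0 j])
      obtain ⟨i, hi⟩ : ∃ i, 0 < MvPolynomial.degreeOf i r := by
        by_contra hall
        push_neg at hall
        have hsupp : ∀ mo ∈ r.support, ∀ x, mo x = 0 := by
          intro mo hmo x
          have h1 : mo x ≤ MvPolynomial.degreeOf x r := by
            rw [MvPolynomial.degreeOf_eq_sup]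
            exact Finset.le_sup (f := fun m => m x) hmo
          have h2 := hall x
          omega
        have hC : r = MvPolynomial.C (MvPolynomial.coeff 0 r) := by
          apply MvPolynomial.ext
          intro mo
          rw [MvPolynomial.coeff_C]
          by_cases hmo : mo = 0
          · subst hmo; simp
          · rw [if_neg (fun e => hmo e.symm)]
            by_cases hin : mo ∈ r.support
            · exact absurd (Finsupp.ext (fun x => hsupp mo hin x)) hmo
            · exact MvPolynomial.notMem_support_iff.mp hin
        have hc0 : MvPolynomial.coeff 0 r ≠ 0 := by
          intro e
          rw [e, map_zero] at hC
          exact hr0 hC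
        exact hru (hC ▸ (isUnit_iff_ne_zero.mpr hc0).map MvPolynomial.C)
      set π : Equiv.Perm (Fin (m + 1)) := Equiv.swap i 0 with hπ
      set T : MvPolynomial (Fin (m + 1)) K ≃+* Polynomial (MvPolynomial (Fin m) K) :=
        (MvPolynomial.renameEquiv K π).toRingEquiv.trans
          (MvPolynomial.finSuccEquiv K m).toRingEquiv with hTdef
      have hT : ∀ x, T x = MvPolynomial.finSuccEquiv K m (MvPolynomial.rename π x) :=
        fun _ => rfl
      set h' : Fin (m + 1) → Polynomial K := h ∘ π.symm with hh'
      have hh'pos : ∀ i, 0 < (h' i).natDegree := fun i => hh _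
      have hTsub : ∀ u, T (substVars h u)
          = ((T u).map (substVars fun j => h' j.succ)).comp ((h' 0).map MvPolynomial.C) := by
        intro u
        rw [hT, rename_substVars π h u, hT]
        exact finSuccEquiv_substVars h' (MvPolynomial.rename π u)
      have hV : ∀ ρ : Polynomial (MvPolynomial (Fin m) K), (∀ j, ρ ∣ T (f j)) → IsUnit ρ := by
        intro ρ hρ
        have h1 : ∀ j, T.symm ρ ∣ f j := fun j => by
          have := map_dvd T.symm (hρ j)
          rwa [RingEquiv.symm_apply_apply] at this
        have h2 := (hf _ h1).map T.toRingHom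
        have h3 : T.toRingHom (T.symm ρ) = ρ := T.apply_symm_apply ρ
        rwa [h3] at h2
      obtain ⟨β, m₀, hm₀, hsum⟩ := bezout (fun j => T (f j)) hV
      set ψ : MvPolynomial (Fin m) K →+* MvPolynomial (Fin m) K :=
        substVars (fun j => h' j.succ) with hψdef
      set W : Polynomial (MvPolynomial (Fin m) K) := (h' 0).map MvPolynomial.C with hWdef
      set Φ : Polynomial (MvPolynomial (Fin m) K) →+* Polynomial (MvPolynomial (Fin m) K) :=
        (Polynomial.eval₂RingHom Polynomial.C W).comp (Polynomial.mapRingHom ψ) with hΦdef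
      have hΦ : ∀ p, Φ p = (p.map ψ).comp W := fun p => rfl
      have hdvd : T r ∣ Polynomial.C (ψ m₀) := by
        have h1 := congrArg Φ hsum
        rw [map_sum] at h1
        have h2 : Φ (Polynomial.C m₀) = Polynomial.C (ψ m₀) := by
          rw [hΦ, Polynomial.map_C, Polynomial.C_comp]
        rw [h2] at h1
        rw [← h1]
        apply Finset.dvd_sum
        intro j _
        rw [map_mul]
        apply Dvd.dvd.mul_left
        rw [hΦ, ← hTsub]
        exact map_dvd T.toRingHom (hr j)
      have hψinj : Function.Injective ψ := substVars_injective _ (fun j => hh _)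
      have hψm₀ : ψ m₀ ≠ 0 := fun e => hm₀ (hψinj (by rw [e, map_zero]))
      have hTrdeg : 0 < (T r).natDegree := by
        rw [hT, MvPolynomial.natDegree_finSuccEquiv]
        have hπi : π i = 0 := Equiv.swap_apply_left i 0
        rw [← hπi, MvPolynomial.degreeOf_rename_of_injective π.injective]
        exact hi
      obtain ⟨t, ht⟩ := hdvd
      have hTr0 : T r ≠ 0 := fun e => hr0 (by simpa using congrArg T.symm e)
      have ht0 : t ≠ 0 := by
        rintro rfl
        rw [mul_zero] at ht
        exact hψm₀ (Polynomial.C_eq_zero.mp ht)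
      have hdeg := congrArg Polynomial.natDegree ht
      rw [Polynomial.natDegree_C, Polynomial.natDegree_mul hTr0 ht0] at hdeg
      omega

theorem comp_ne_zero {R : Type*} [CommRing R] [IsDomain R] {U W : Polynomial R}
    (hU : U ≠ 0) (hW : W.natDegree ≠ 0) : U.comp W ≠ 0 := by
  intro e
  have hW0 : W ≠ 0 := fun e0 => hW (by rw [e0]; simp)
  have h2 : U.leadingCoeff * W.leadingCoeff ^ U.natDegree ≠ 0 :=
    mul_ne_zero (Polynomial.leadingCoeff_ne_zero.mpr hU)
      (pow_ne_zero _ (Polynomial.leadingCoeff_ne_zero.mpr hW0))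
  rw [← Polynomial.leadingCoeff_comp hW, e, Polynomial.leadingCoeff_zero] at h2
  exact h2 rfl

theorem isPrimitive_substAll {n : ℕ} (h : Fin n → Polynomial K) (g : Polynomial K)
    (hh : ∀ i, 0 < (h i).natDegree) (hg : 0 < g.natDegree)
    (p : Polynomial (MvPolynomial (Fin n) K)) (hp : p.IsPrimitive) :
    (substAll h g p).IsPrimitive := by
  intro r hr
  by_contra hru
  have hp0 : p ≠ 0 := by
    rintro rfl
    exact hru (hp r (dvd_zero _))
  have hfam : ∀ ρ : MvPolynomial (Fin n) K,
      (∀ j : Fin (p.natDegree + 1), ρ ∣ p.coeff j) → IsUnit ρ := by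
    intro ρ hρ
    apply hp
    rw [Polynomial.C_dvd_iff_dvd_coeff]
    intro i
    by_cases hi : i ≤ p.natDegree
    · exact hρ ⟨i, by omega⟩
    · rw [Polynomial.coeff_eq_zero_of_natDegree_lt (by omega)]
      exact dvd_zero _
  have hφinj : Function.Injective (substVars h) := substVars_injective h hh
  have hCinj : Function.Injective (MvPolynomial.C : K →+* MvPolynomial (Fin n) K) :=
    MvPolynomial.C_injective _ _
  have hP0 : substAll h g p ≠ 0 := by
    rw [substAll]
    apply comp_ne_zero
    · rw [Ne, Polynomial.map_eq_zero_iff hφinj]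
      exact hp0
    · rw [Polynomial.natDegree_map_eq_of_injective hCinj g]
      omega
  have hr0 : r ≠ 0 := by
    rintro rfl
    rw [map_zero] at hr
    exact hP0 (zero_dvd_iff.mp hr)
  obtain ⟨q₁, hq₁irr, hq₁dvd⟩ := WfDvdMonoid.exists_irreducible_factor hru hr0
  have hq₁prime : Prime q₁ := UniqueFactorizationMonoid.irreducible_iff_prime.mp hq₁irr
  set I : Ideal (MvPolynomial (Fin n) K) := Ideal.span {q₁} with hIdef
  have hIprime : I.IsPrime := (Ideal.span_singleton_prime hq₁prime.ne_zero).mpr hq₁prime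
  haveI : IsDomain (MvPolynomial (Fin n) K ⧸ I) := (Ideal.Quotient.isDomain_iff_prime I).mpr hIprime
  set πq : MvPolynomial (Fin n) K →+* MvPolynomial (Fin n) K ⧸ I := Ideal.Quotient.mk I with hπq
  have hπP : (substAll h g p).map πq = 0 := by
    obtain ⟨t, ht⟩ := dvd_trans (map_dvd (Polynomial.C : MvPolynomial (Fin n) K →+* _) hq₁dvd) hr
    rw [ht, Polynomial.map_mul, Polynomial.map_C]
    have hz : πq q₁ = 0 := Ideal.Quotient.eq_zero_iff_mem.mpr
      (Ideal.subset_span (Set.mem_singleton _))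
    rw [hz, Polynomial.C_0, zero_mul]
  rw [substAll, Polynomial.map_comp, Polynomial.map_map, Polynomial.map_map] at hπP
  have hKinj : Function.Injective (πq.comp (MvPolynomial.C : K →+* MvPolynomial (Fin n) K)) :=
    RingHom.injective _
  have hWdeg : (g.map (πq.comp (MvPolynomial.C : K →+* MvPolynomial (Fin n) K))).natDegree
      = g.natDegree := Polynomial.natDegree_map_eq_of_injective hKinj g
  have hU0 : p.map (πq.comp (substVars h)) = 0 := by
    by_contra hU
    exact comp_ne_zero hU (by rw [hWdeg]; omega) hπP
  have hdvdcoeff : ∀ j : Fin (p.natDegree + 1), q₁ ∣ substVars h (p.coeff j) := by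
    intro j
    have h1 := congrArg (fun pp => Polynomial.coeff pp j) hU0
    simp only [Polynomial.coeff_map, Polynomial.coeff_zero, RingHom.comp_apply] at h1
    rw [← Ideal.mem_span_singleton, ← hIdef]
    exact Ideal.Quotient.eq_zero_iff_mem.mp h1
  exact hq₁prime.not_unit (key h hh _ hfam q₁ hdvdcoeff)

theorem isRelPrime_substVars {n : ℕ} (h : Fin n → Polynomial K)
    (hh : ∀ i, 0 < (h i).natDegree) {a b : MvPolynomial (Fin n) K}
    (hab : IsRelPrime a b) :
    IsRelPrime (substVars h a) (substVars h b) := by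
  intro d hda hdb
  refine key h hh ![a, b] ?_ d ?_
  · intro ρ hρ
    exact hab (by simpa using hρ 0) (by simpa using hρ 1)
  · intro j
    fin_cases j
    · simpa using hda
    · simpa using hdb

theorem irreducible_of_irreducible_reverse {R : Type*} [CommRing R] [IsDomain R]
    {P : Polynomial R} (h0 : P.coeff 0 ≠ 0) (hrev : Irreducible P.reverse) : Irreducible P := by
  have unit_of : ∀ w : Polynomial R, w.coeff 0 ≠ 0 → IsUnit w.reverse → IsUnit w := by
    intro w hwc hw
    have ht : w.natTrailingDegree = 0 := Polynomial.natTrailingDegree_eq_zero.mpr (Or.inr hwc)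
    have hd : w.natDegree = 0 := by
      have := Polynomial.natDegree_eq_zero_of_isUnit hw
      rw [Polynomial.reverse_natDegree, ht, Nat.sub_zero] at this
      exact this
    have eC := Polynomial.eq_C_of_natDegree_eq_zero hd
    rw [eC] at hw ⊢
    rwa [Polynomial.reverse_C] at hw
  constructor
  · intro hu
    have hd := Polynomial.natDegree_eq_zero_of_isUnit hu
    have e := Polynomial.eq_C_of_natDegree_eq_zero hd
    exact hrev.not_isUnit (by rw [e, Polynomial.reverse_C, ← e]; exact hu)
  · intro u v huv
    have hcz : u.coeff 0 * v.coeff 0 ≠ 0 := by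
      rw [← Polynomial.mul_coeff_zero, ← huv]
      exact h0
    have hm : P.reverse = u.reverse * v.reverse := by
      rw [huv, Polynomial.reverse_mul_of_domain]
    rcases hrev.isUnit_or_isUnit hm with hru | hrv
    · exact Or.inl (unit_of u (left_ne_zero_of_mul hcz) hru)
    · exact Or.inr (unit_of v (right_ne_zero_of_mul hcz) hrv)

end NHIPProof

open NHIPProof in
/-- Corollary 2.5: if `a` is NHIP, then any primitive `p = a·c + b` with
`gcd(a, c_d·b) = 1` is HIP. -/
theorem stmt3 {K : Type*} [Field K] {n : ℕ}
    (a b : MvPolynomial (Fin n) K) (c : Polynomial (MvPolynomial (Fin n) K))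
    (hc : 0 < c.natDegree)
    (ha : IsNHIP a)
    (hgcd : IsRelPrime a (c.leadingCoeff * b))
    (hprim : (Polynomial.C a * c + Polynomial.C b).IsPrimitive) :
    ∀ (h : Fin n → Polynomial K) (g : Polynomial K),
      (∀ i, 0 < (h i).natDegree) → 0 < g.natDegree →
      Irreducible (substAll h g (Polynomial.C a * c + Polynomial.C b)) := by
  intro h g hh hg
  classical
  have hφinj : Function.Injective (substVars h) := substVars_injective h hh
  set σm : MvPolynomial (Fin n) K →+* MvPolynomial (Fin n) (AlgebraicClosure K) :=
    (MvPolynomial.map (algebraMap K (AlgebraicClosure K))) with hσm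
  obtain ⟨q, hqirr, hqdvd, hqsq⟩ := ha h hh
  set A : MvPolynomial (Fin n) K := substVars h a with hA
  set B : MvPolynomial (Fin n) K := substVars h b with hB
  have hA0 : A ≠ 0 := by
    rintro e
    apply hqsq
    rw [e, map_zero]
    exact dvd_zero _
  have hAnu : ¬IsUnit A := fun hu => hqirr.not_isUnit (isUnit_of_dvd_unit hqdvd (hu.map σm))
  have hqprime : Prime q := UniqueFactorizationMonoid.irreducible_iff_prime.mp hqirr
  obtain ⟨S, hSprime, hSassoc⟩ := UniqueFactorizationMonoid.exists_prime_factors A hA0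
  have hqdvdS : q ∣ (S.map σm).prod := by
    obtain ⟨u, hu⟩ := hSassoc
    have h1 : σm A = (S.map ⇑σm).prod * σm u := by
      rw [← map_multiset_prod, ← map_mul, hu]
    have h2 : q ∣ (S.map ⇑σm).prod * σm u := h1 ▸ hqdvd
    exact ((u.isUnit.map σm).dvd_mul_right).mp h2
  obtain ⟨x, hxmem, hqx⟩ := hqprime.exists_mem_multiset_dvd hqdvdS
  obtain ⟨q₀, hq₀S, rfl⟩ := Multiset.mem_map.mp hxmem
  have hq₀prime : Prime q₀ := hSprime q₀ hq₀S
  have hq₀A : q₀ ∣ A := (Multiset.dvd_prod hq₀S).trans hSassoc.dvd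
  have hq₀sq : ¬q₀ ^ 2 ∣ A := by
    rintro ⟨t, ht⟩
    apply hqsq
    calc q ^ 2 ∣ σm q₀ ^ 2 := pow_dvd_pow_of_dvd hqx 2
      _ ∣ σm A := by rw [ht, map_mul, map_pow]; exact dvd_mul_right _ _
  have hab : IsRelPrime a b := fun d hda hdb => hgcd hda (hdb.mul_left _)
  have halc : IsRelPrime a c.leadingCoeff := fun d hda hdl => hgcd hda (hdl.mul_right _)
  have hAB : IsRelPrime A B := isRelPrime_substVars h hh hab
  have hAlc : IsRelPrime A (substVars h c.leadingCoeff) := isRelPrime_substVars h hh halc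
  have hq₀B : ¬q₀ ∣ B := fun hd => hq₀prime.not_unit (hAB hq₀A hd)
  have hq₀lc : ¬q₀ ∣ substVars h c.leadingCoeff := fun hd => hq₀prime.not_unit (hAlc hq₀A hd)
  set W : Polynomial (MvPolynomial (Fin n) K) := g.map MvPolynomial.C with hWdef
  set c' : Polynomial (MvPolynomial (Fin n) K) := (c.map (substVars h)).comp W with hc'def
  set P : Polynomial (MvPolynomial (Fin n) K) :=
    substAll h g (Polynomial.C a * c + Polynomial.C b) with hPdef
  have hP : P = Polynomial.C A * c' + Polynomial.C B := by
    rw [hPdef, substAll, Polynomial.map_add, Polynomial.map_mul, Polynomial.map_C,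
      Polynomial.map_C, Polynomial.add_comp, Polynomial.mul_comp, Polynomial.C_comp,
      Polynomial.C_comp, hc'def, hWdef]
  have hg0 : g ≠ 0 := fun e => by rw [e] at hg; simp at hg
  have hc0 : c ≠ 0 := fun e => by rw [e] at hc; simp at hc
  have hCinj : Function.Injective (MvPolynomial.C : K →+* MvPolynomial (Fin n) K) :=
    MvPolynomial.C_injective _ _
  have hWdeg : W.natDegree = g.natDegree := Polynomial.natDegree_map_eq_of_injective hCinj g
  have hcmdeg : (c.map (substVars h)).natDegree = c.natDegree :=
    Polynomial.natDegree_map_eq_of_injective hφinj c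
  have hcmlc : (c.map (substVars h)).leadingCoeff = substVars h c.leadingCoeff :=
    Polynomial.leadingCoeff_map_of_injective hφinj c
  have hc'deg : c'.natDegree = c.natDegree * g.natDegree := by
    rw [hc'def, Polynomial.natDegree_comp, hcmdeg, hWdeg]
  have hc'pos : 0 < c'.natDegree := by
    rw [hc'deg]; exact Nat.mul_pos hc hg
  have hWlc : W.leadingCoeff = MvPolynomial.C g.leadingCoeff :=
    Polynomial.leadingCoeff_map_of_injective hCinj g
  have hWlcu : IsUnit W.leadingCoeff := by
    rw [hWlc]
    exact (isUnit_iff_ne_zero.mpr (Polynomial.leadingCoeff_ne_zero.mpr hg0)).map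
      (MvPolynomial.C : K →+* MvPolynomial (Fin n) K)
  have hc'lc : c'.leadingCoeff = substVars h c.leadingCoeff * W.leadingCoeff ^ c.natDegree := by
    rw [hc'def, Polynomial.leadingCoeff_comp (by rw [hWdeg]; omega), hcmlc, hcmdeg]
  have hφlc0 : substVars h c.leadingCoeff ≠ 0 := fun e =>
    Polynomial.leadingCoeff_ne_zero.mpr hc0 (hφinj (by rw [e, map_zero]))
  have hc'lc0 : c'.leadingCoeff ≠ 0 := by
    rw [hc'lc]
    exact mul_ne_zero hφlc0 (pow_ne_zero _ hWlcu.ne_zero)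
  have hc'0 : c' ≠ 0 := fun e => hc'lc0 (by rw [e, Polynomial.leadingCoeff_zero])
  have hq₀c'lc : ¬q₀ ∣ c'.leadingCoeff := by
    rw [hc'lc]
    intro hd
    exact hq₀lc ((hWlcu.pow c.natDegree).dvd_mul_right.mp hd)
  have hPdeg : P.natDegree = c'.natDegree := by
    rw [hP, Polynomial.natDegree_add_eq_left_of_natDegree_lt
      (by rw [Polynomial.natDegree_C, Polynomial.natDegree_C_mul hA0]; exact hc'pos),
      Polynomial.natDegree_C_mul hA0]
  have hNpos : 0 < P.natDegree := by rw [hPdeg]; exact hc'pos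
  have hcoeff : ∀ j, P.coeff j = A * c'.coeff j + (if j = 0 then B else 0) := by
    intro j
    rw [hP]
    simp [Polynomial.coeff_add, Polynomial.coeff_C_mul, Polynomial.coeff_C]
  have hcoeffN : P.coeff P.natDegree = A * c'.leadingCoeff := by
    rw [hcoeff, if_neg (by omega), add_zero, hPdeg, Polynomial.coeff_natDegree]
  have hq₀P0 : ¬q₀ ∣ P.coeff 0 := by
    rw [hcoeff 0, if_pos rfl]
    intro hd
    exact hq₀B ((dvd_add_right (hq₀A.mul_right _)).mp hd)
  have hP00 : P.coeff 0 ≠ 0 := fun e => hq₀P0 (by rw [e]; exact dvd_zero _)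
  set I : Ideal (MvPolynomial (Fin n) K) := Ideal.span {q₀} with hIdef
  have hIprime : I.IsPrime := (Ideal.span_singleton_prime hq₀prime.ne_zero).mpr hq₀prime
  have htrail : P.natTrailingDegree = 0 :=
    Polynomial.natTrailingDegree_eq_zero.mpr (Or.inr hP00)
  have hrevdeg : P.reverse.natDegree = P.natDegree := by
    rw [Polynomial.reverse_natDegree, htrail, Nat.sub_zero]
  have hrevcoeff : ∀ j, j ≤ P.natDegree → P.reverse.coeff j = P.coeff (P.natDegree - j) := by
    intro j hj
    rw [Polynomial.coeff_reverse, Polynomial.revAt_le hj]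
  have heis : P.reverse.IsEisensteinAt I := by
    refine ⟨?_, ?_, ?_⟩
    · rw [← Polynomial.coeff_natDegree, hrevdeg, hrevcoeff _ le_rfl, Nat.sub_self]
      intro hmem
      exact hq₀P0 (Ideal.mem_span_singleton.mp hmem)
    · intro j hj
      rw [hrevdeg] at hj
      rw [hrevcoeff j (le_of_lt hj), hcoeff, if_neg (by omega), add_zero]
      exact Ideal.mem_span_singleton.mpr (hq₀A.mul_right _)
    · rw [hrevcoeff 0 (by omega), Nat.sub_zero, hcoeffN, hIdef, Ideal.span_singleton_pow,
        Ideal.mem_span_singleton]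
      rintro ⟨t, ht⟩
      obtain ⟨A₁, hA₁⟩ := hq₀A
      rw [hA₁] at ht
      have hq₀0 : q₀ ≠ 0 := hq₀prime.ne_zero
      have h1 : A₁ * c'.leadingCoeff = q₀ * t := by
        apply mul_left_cancel₀ hq₀0
        calc q₀ * (A₁ * c'.leadingCoeff) = q₀ * A₁ * c'.leadingCoeff := by ring
          _ = q₀ ^ 2 * t := ht
          _ = q₀ * (q₀ * t) := by ring
      rcases hq₀prime.dvd_or_dvd ⟨t, h1⟩ with h3 | h3
      · apply hq₀sq
        obtain ⟨s, hs⟩ := h3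
        exact ⟨s, by rw [hA₁, hs]; ring⟩
      · exact hq₀c'lc h3
  have hPprim : P.IsPrimitive := isPrimitive_substAll h g hh hg _ hprim
  have hrevprim : P.reverse.IsPrimitive := by
    intro r hr
    apply hPprim
    rw [Polynomial.C_dvd_iff_dvd_coeff] at hr ⊢
    intro j
    by_cases hj : j ≤ P.natDegree
    · have h1 := hr (P.natDegree - j)
      rwa [hrevcoeff (P.natDegree - j) (by omega), (by omega : P.natDegree - (P.natDegree - j) = j)]
        at h1
    · rw [Polynomial.coeff_eq_zero_of_natDegree_lt (by omega : P.natDegree < j)]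
      exact dvd_zero _
  have hrevirr : Irreducible P.reverse :=
    heis.irreducible hIprime hrevprim (by rw [hrevdeg]; exact hNpos)
  exact irreducible_of_irreducible_reverse hP00 hrevirr
end

section
/- Let K be a field, f(x) ∈ K[x] with formal derivative f'(x) ≠ 0, and a, b ∈ K with a ≠ b. Then the polynomial (f(x) − a)(f(x) − b) has at least two simple (multiplicity-one) roots in the algebraic closure of K. -/
/-!
Over an algebraically closed field, every root `x` of `g = (f - a)(f - b)` is a root of exactly one
factor `f - c`, and `f' = (f - c)'`, so its multiplicity in `g` exceeds its multiplicity in `f'` by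
at most one. Summing over the distinct roots, the total excess `deg g - #{roots of g}` is at most
`deg f' ≤ deg f - 1`. A multiple root contributes at least half its multiplicity to the excess, so
`2 deg f = deg g ≤ #{simple roots} + 2 (deg f - 1)`, leaving at least two simple roots.
-/

open Polynomial

namespace Multiset

variable {α : Type*} [DecidableEq α]

theorem card_sub_card_dedup_le_of_count_sub_one_le {s t : Multiset α}
    (h : ∀ x, count x s - 1 ≤ count x t) : card s - card s.dedup ≤ card t := by
  rw [← card_sub (dedup_le s)]
  refine card_le_card (le_iff_count.2 fun x => ?_)
  rw [count_sub, count_dedup]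
  split_ifs with hx
  · exact h x
  · simp [count_eq_zero_of_notMem hx]

theorem card_le_card_filter_count_eq_one_add (s : Multiset α) :
    card s ≤ (s.toFinset.filter (fun x => count x s = 1)).card + 2 * (card s - card s.dedup) := by
  have hexcess : card s - card s.dedup = ∑ x ∈ s.toFinset, (count x s - 1) := by
    rw [← card_toFinset, Finset.card_eq_sum_ones, ← toFinset_sum_count_eq,
      Finset.sum_tsub_distrib]
    exact fun x hx => count_pos.2 (mem_toFinset.1 hx)
  rw [hexcess, Finset.card_filter, Finset.mul_sum, ← Finset.sum_add_distrib,
    ← toFinset_sum_count_eq]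
  refine Finset.sum_le_sum fun x hx => ?_
  have := count_pos.2 (mem_toFinset.1 hx)
  split_ifs <;> omega

end Multiset

namespace Polynomial

theorem sub_C_ne_zero_of_derivative_ne_zero {R : Type*} [CommRing R] {p : R[X]}
    (hp : derivative p ≠ 0) (c : R) : p - C c ≠ 0 :=
  fun h => hp (by rw [sub_eq_zero] at h; simp [h])

theorem rootMultiplicity_sub_C_mul_sub_C_sub_one_le {R : Type*} [CommRing R] [IsDomain R]
    {p : R[X]} (hp : derivative p ≠ 0) {a b : R} (hab : a ≠ b) (x : R) :
    rootMultiplicity x ((p - C a) * (p - C b)) - 1 ≤ rootMultiplicity x (derivative p) := by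
  have hfactor : ∀ c, rootMultiplicity x (p - C c) - 1 ≤ rootMultiplicity x (derivative p) :=
    fun c => by
      simpa using rootMultiplicity_sub_one_le_derivative_rootMultiplicity_of_ne_zero (p - C c) x
        (by simpa using hp)
  rw [rootMultiplicity_mul (mul_ne_zero (sub_C_ne_zero_of_derivative_ne_zero hp a)
    (sub_C_ne_zero_of_derivative_ne_zero hp b))]
  by_cases ha : p.eval x = a
  · rw [rootMultiplicity_eq_zero (p := p - C b) (by simp [ha, sub_eq_zero, hab]), add_zero]
    exact hfactor a
  · rw [rootMultiplicity_eq_zero (p := p - C a) (by simpa [sub_eq_zero] using ha), zero_add]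
    exact hfactor b

theorem exists_ne_rootMultiplicity_sub_C_mul_sub_C_eq_one {L : Type*} [Field L] [IsAlgClosed L]
    {p : L[X]} (hp : derivative p ≠ 0) {a b : L} (hab : a ≠ b) :
    ∃ α β : L, α ≠ β ∧ rootMultiplicity α ((p - C a) * (p - C b)) = 1 ∧
      rootMultiplicity β ((p - C a) * (p - C b)) = 1 := by
  classical
  set g := (p - C a) * (p - C b)
  have hdeg : 1 ≤ p.natDegree :=
    Nat.one_le_iff_ne_zero.2 fun h => hp (derivative_of_natDegree_zero h)
  have hcard : Multiset.card g.roots = 2 * p.natDegree := by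
    rw [← (IsAlgClosed.splits g).natDegree_eq_card_roots, natDegree_mul, natDegree_sub_C,
      natDegree_sub_C, two_mul]
    all_goals exact sub_C_ne_zero_of_derivative_ne_zero hp _
  have hexcess : Multiset.card g.roots - Multiset.card g.roots.dedup ≤ p.natDegree - 1 :=
    (Multiset.card_sub_card_dedup_le_of_count_sub_one_le (t := (derivative p).roots) fun x => by
      simpa only [count_roots] using rootMultiplicity_sub_C_mul_sub_C_sub_one_le hp hab x).trans
      ((card_roots' _).trans (natDegree_derivative_le p))
  have hsimple : 1 < (g.roots.toFinset.filter (fun x => g.roots.count x = 1)).card := by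
    have := Multiset.card_le_card_filter_count_eq_one_add g.roots
    omega
  obtain ⟨α, hα, β, hβ, hne⟩ := Finset.one_lt_card.1 hsimple
  simp only [Finset.mem_filter, count_roots] at hα hβ
  exact ⟨α, β, hne, hα.2, hβ.2⟩

end Polynomial

/-- Lemma 2.6: if `f' ≠ 0` and `a ≠ b`, then `(f - a)(f - b)` has at least two
simple roots in the algebraic closure. -/
theorem stmt4 {K : Type*} [Field K] (f : Polynomial K) (hf : derivative f ≠ 0)
    (a b : K) (hab : a ≠ b) :
    ∃ α β : AlgebraicClosure K, α ≠ β ∧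
      rootMultiplicity α (((f - C a) * (f - C b)).map (algebraMap K (AlgebraicClosure K))) = 1 ∧
      rootMultiplicity β (((f - C a) * (f - C b)).map (algebraMap K (AlgebraicClosure K))) = 1 := by
  set φ := algebraMap K (AlgebraicClosure K)
  have hmap : ((f - C a) * (f - C b)).map φ = (f.map φ - C (φ a)) * (f.map φ - C (φ b)) := by
    simp
  rw [hmap]
  exact exists_ne_rootMultiplicity_sub_C_mul_sub_C_eq_one
    (by rwa [derivative_map, Polynomial.map_ne_zero_iff φ.injective]) (φ.injective.ne hab)
end

section
/- Let K be a field, h(x) ∈ K[x] a polynomial with at least n > 1 simple roots in the algebraic closure of K, and f(x) ∈ K[x] with f'(x) ≠ 0. Then h(f(x)) has at least n simple roots in the algebraic closure of K. -/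
open Polynomial

/-- Corollary 2.8: if `h` has at least `n > 1` simple roots in the algebraic closure
and `f' ≠ 0`, then `h(f(x))` has at least `n` simple roots in the algebraic closure. -/
theorem stmt6 {K : Type*} [Field K] (h f : Polynomial K) (n : ℕ) (hn : 1 < n)
    (hf : derivative f ≠ 0)
    (hroots : ∃ s : Finset (AlgebraicClosure K), n ≤ s.card ∧
      ∀ α ∈ s, rootMultiplicity α (h.map (algebraMap K (AlgebraicClosure K))) = 1) :
    ∃ t : Finset (AlgebraicClosure K), n ≤ t.card ∧
      ∀ α ∈ t, rootMultiplicity α ((h.comp f).map (algebraMap K (AlgebraicClosure K))) = 1 := by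
  classical
  set L := AlgebraicClosure K
  set φ := algebraMap K L with hφ
  set F : L[X] := f.map φ with hFdef
  set H : L[X] := h.map φ with hHdef
  obtain ⟨s, hs, hsimple⟩ := hroots
  have hF' : derivative F ≠ 0 := by
    rw [hFdef, derivative_map]
    exact (Polynomial.map_ne_zero_iff (algebraMap K L).injective).mpr hf
  have hFne : F ≠ 0 := fun h0 => hF' (by rw [h0, derivative_zero])
  have hd1 : 1 ≤ F.natDegree := by
    by_contra hd
    push_neg at hd
    have : F = C (F.coeff 0) := eq_C_of_natDegree_eq_zero (by omega)
    exact hF' (by rw [this, derivative_C])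
  set d := F.natDegree with hddef
  -- derivative of F - C α
  have hderC : ∀ α : L, derivative (F - C α) = derivative F := by
    intro α; rw [derivative_sub, derivative_C, sub_zero]
  have hpne : ∀ α : L, F - C α ≠ 0 := by
    intro α h0
    exact hF' (by rw [← hderC α, h0, derivative_zero])
  -- membership in roots gives F.eval β = α
  have hmemroots : ∀ α β : L, β ∈ (F - C α).roots ↔ F.eval β = α := by
    intro α β
    rw [mem_roots (hpne α), IsRoot, eval_sub, eval_C, sub_eq_zero]
  -- good and bad parts
  set G : L → Finset L := fun α =>
    (F - C α).roots.toFinset.filter (fun β => (derivative F).eval β ≠ 0) with hGdef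
  set B : L → Finset L := fun α =>
    (F - C α).roots.toFinset.filter (fun β => (derivative F).eval β = 0) with hBdef
  have hGα : ∀ α β : L, β ∈ G α ↔ (F.eval β = α ∧ (derivative F).eval β ≠ 0) := by
    intro α β
    simp only [hGdef, Finset.mem_filter, Multiset.mem_toFinset, hmemroots]
  have hBα : ∀ α β : L, β ∈ B α ↔ (F.eval β = α ∧ (derivative F).eval β = 0) := by
    intro α β
    simp only [hBdef, Finset.mem_filter, Multiset.mem_toFinset, hmemroots]
  -- per α : card (G α) + Σ_{β ∈ B α} mult = d
  have hkey : ∀ α : L, (G α).card + ∑ β ∈ B α, rootMultiplicity β (F - C α) = d := by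
    intro α
    have hcard : Multiset.card (F - C α).roots = d := by
      have := (splits_iff_card_roots (f := F - C α)).mp (IsAlgClosed.splits _)
      rwa [natDegree_sub_C] at this
    have hsum : ∑ β ∈ (F - C α).roots.toFinset, (F - C α).roots.count β = d := by
      rw [Multiset.toFinset_sum_count_eq, hcard]
    rw [← Finset.sum_filter_add_sum_filter_not (F - C α).roots.toFinset
      (fun β => (derivative F).eval β ≠ 0)] at hsum
    have hgood : ∑ β ∈ (F - C α).roots.toFinset.filter (fun β => (derivative F).eval β ≠ 0),
        (F - C α).roots.count β = (G α).card := by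
      rw [Finset.card_eq_sum_ones]
      apply Finset.sum_congr rfl
      intro β hβ
      rw [Finset.mem_filter, Multiset.mem_toFinset] at hβ
      rw [count_roots]
      have hroot : (F - C α).IsRoot β := (mem_roots (hpne α)).mp hβ.1
      have hpos : 0 < rootMultiplicity β (F - C α) :=
        (rootMultiplicity_pos (hpne α)).mpr hroot
      have hnot : ¬ 1 < rootMultiplicity β (F - C α) := by
        rw [one_lt_rootMultiplicity_iff_isRoot (hpne α)]
        rintro ⟨-, hder⟩
        rw [hderC α] at hder
        exact hβ.2 hder
      omega
    rw [hgood] at hsum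
    have hBeq : (F - C α).roots.toFinset.filter (fun β => ¬ (derivative F).eval β ≠ 0) = B α := by
      rw [hBdef]
      apply Finset.filter_congr
      intro β _
      simp
    rw [hBeq] at hsum
    rw [← hsum]
    congr 1
    apply Finset.sum_congr rfl
    intro β _
    rw [count_roots]
  -- disjointness
  have hGdisj : ∀ α ∈ s, ∀ α' ∈ s, α ≠ α' → Disjoint (G α) (G α') := by
    intro α _ α' _ hne
    rw [Finset.disjoint_left]
    intro β hβ hβ'
    exact hne (((hGα α β).mp hβ).1 ▸ (((hGα α' β).mp hβ').1).symm ▸ rfl)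
  have hBdisj : ∀ α ∈ s, ∀ α' ∈ s, α ≠ α' → Disjoint (B α) (B α') := by
    intro α _ α' _ hne
    rw [Finset.disjoint_left]
    intro β hβ hβ'
    exact hne (((hBα α β).mp hβ).1 ▸ (((hBα α' β).mp hβ').1).symm ▸ rfl)
  set t := s.biUnion G with htdef
  have htcard : t.card = ∑ α ∈ s, (G α).card := Finset.card_biUnion hGdisj
  -- sum of bad multiplicities
  set Bsum := ∑ α ∈ s, ∑ β ∈ B α, rootMultiplicity β (F - C α) with hBsum
  have htotal : t.card + Bsum = s.card * d := by
    rw [htcard, hBsum, ← Finset.sum_add_distrib]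
    rw [Finset.sum_congr rfl (fun α _ => hkey α)]
    rw [Finset.sum_const, smul_eq_mul]
  -- bound Bsum
  have hBsub : ∀ α : L, B α ⊆ (derivative F).roots.toFinset := by
    intro α β hβ
    rw [Multiset.mem_toFinset, mem_roots hF']
    exact ((hBα α β).mp hβ).2
  have hmultbound : ∀ α : L, ∀ β ∈ B α,
      rootMultiplicity β (F - C α) ≤ rootMultiplicity β (derivative F) + 1 := by
    intro α β _
    have := rootMultiplicity_sub_one_le_derivative_rootMultiplicity_of_ne_zero
      (F - C α) β (by rw [hderC α]; exact hF')
    rw [hderC α] at this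
    omega
  have hBpd : (↑s : Set L).PairwiseDisjoint B :=
    fun α hα α' hα' hne => hBdisj α hα α' hα' hne
  have hBsum_le : Bsum ≤ ∑ β ∈ s.biUnion B, (rootMultiplicity β (derivative F) + 1) := by
    rw [hBsum, Finset.sum_biUnion hBpd]
    exact Finset.sum_le_sum (fun α hα => Finset.sum_le_sum (hmultbound α))
  have hsub : s.biUnion B ⊆ (derivative F).roots.toFinset := by
    intro β hβ
    obtain ⟨α, -, hβ⟩ := Finset.mem_biUnion.mp hβ
    exact hBsub α hβ
  have hrc : (derivative F).roots.card ≤ d - 1 :=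
    le_trans ((derivative F).card_roots') (natDegree_derivative_le F)
  have hsum2 : ∑ β ∈ s.biUnion B, (rootMultiplicity β (derivative F) + 1)
      ≤ (d - 1) + (d - 1) := by
    rw [Finset.sum_add_distrib, Finset.sum_const, smul_eq_mul, mul_one]
    have h1 : ∑ β ∈ s.biUnion B, rootMultiplicity β (derivative F) ≤ d - 1 := by
      calc ∑ β ∈ s.biUnion B, rootMultiplicity β (derivative F)
          ≤ ∑ β ∈ (derivative F).roots.toFinset, rootMultiplicity β (derivative F) :=
            Finset.sum_le_sum_of_subset hsub
        _ = ∑ β ∈ (derivative F).roots.toFinset, (derivative F).roots.count β :=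
            Finset.sum_congr rfl (fun β _ => (count_roots _).symm)
        _ = (derivative F).roots.card := Multiset.toFinset_sum_count_eq _
        _ ≤ d - 1 := hrc
    have h2 : (s.biUnion B).card ≤ d - 1 := by
      calc (s.biUnion B).card ≤ (derivative F).roots.toFinset.card :=
            Finset.card_le_card hsub
        _ ≤ (derivative F).roots.card := (derivative F).roots.toFinset_card_le
        _ ≤ d - 1 := hrc
    omega
  have hBsum2 : Bsum ≤ (d - 1) + (d - 1) := le_trans hBsum_le hsum2
  -- conclude cardinality
  refine ⟨t, ?_, ?_⟩
  · obtain ⟨e, he⟩ : ∃ e, d = e + 1 := ⟨d - 1, by omega⟩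
    rw [he] at htotal
    have hmul : s.card * (e + 1) = s.card * e + s.card := by ring
    rw [hmul] at htotal
    have h2e : 2 * e ≤ s.card * e := Nat.mul_le_mul_right e (by omega)
    have hB2 : Bsum ≤ 2 * e := by omega
    omega
  · intro β hβ
    obtain ⟨α, hαs, hβG⟩ := Finset.mem_biUnion.mp hβ
    obtain ⟨hFβ, hF'β⟩ := (hGα α β).mp hβG
    have hHmult : rootMultiplicity α H = 1 := hsimple α hαs
    have hHne : H ≠ 0 := by
      intro h0
      rw [h0, rootMultiplicity_zero] at hHmult
      exact one_ne_zero hHmult.symm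
    have hHroot : H.IsRoot α := (rootMultiplicity_pos hHne).mp (by omega)
    have hHder : ¬ (derivative H).IsRoot α := by
      intro hder
      have : 1 < rootMultiplicity α H :=
        (one_lt_rootMultiplicity_iff_isRoot hHne).mpr ⟨hHroot, hder⟩
      omega
    have hcompne : H.comp F ≠ 0 := by
      intro h0
      rw [comp_eq_zero_iff] at h0
      rcases h0 with h0 | ⟨-, hFC⟩
      · exact hHne h0
      · exact hF' (by rw [hFC, derivative_C])
    have hmapeq : (h.comp f).map φ = H.comp F := by
      rw [hFdef, hHdef, Polynomial.map_comp]
    rw [hmapeq]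
    have hroot : (H.comp F).IsRoot β := by
      rw [IsRoot, eval_comp, hFβ]
      exact hHroot
    have hpos : 0 < rootMultiplicity β (H.comp F) :=
      (rootMultiplicity_pos hcompne).mpr hroot
    have hnot : ¬ 1 < rootMultiplicity β (H.comp F) := by
      rw [one_lt_rootMultiplicity_iff_isRoot hcompne]
      rintro ⟨-, hder⟩
      rw [IsRoot, derivative_comp, eval_mul, eval_comp, hFβ] at hder
      rcases mul_eq_zero.mp hder with h1 | h2
      · exact hF'β h1
      · exact hHder h2
    omega
end

section
/- Let K be a field of characteristic zero and p(x,y) = a(x)·c(x,y) + b(x) a primitive polynomial in K[x][y], where c(x,y) = Σᵢ₌₀^d cᵢ(x)yⁱ, gcd(a(x), c_d(x)·b(x)) = 1, and a(x) has at least two simple roots in the algebraic closure of K. Then p(x,y) is HIP: for all non-constant univariate polynomials f(x), g(y) over K, the polynomial p(f(x), g(y)) is irreducible in K[x,y]. -/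
open Polynomial

/-- The substitution `x ↦ f(x)`, `y ↦ g(y)` on `p ∈ K[x][y]`. -/
noncomputable def substXY {K : Type*} [Field K] (f g : Polynomial K)
    (p : Polynomial (Polynomial K)) : Polynomial (Polynomial K) :=
  (p.map (Polynomial.aeval f).toRingHom).comp (g.map Polynomial.C)

private lemma sum_count_le {α : Type*} [DecidableEq α] (S : Finset α) (M : Multiset α) :
    ∑ t ∈ S, M.count t ≤ Multiset.card M := by
  calc ∑ t ∈ S, M.count t ≤ ∑ t ∈ S ∪ M.toFinset, M.count t :=
        Finset.sum_le_sum_of_subset Finset.subset_union_left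
    _ = ∑ t ∈ M.toFinset, M.count t := by
        refine (Finset.sum_subset Finset.subset_union_right ?_).symm
        intro x _ hx
        exact Multiset.count_eq_zero_of_notMem (by simpa using hx)
    _ = Multiset.card M := M.toFinset_sum_count_eq

private lemma count_aux {L : Type*} [Field L] [CharZero L] [IsAlgClosed L] [DecidableEq L]
    (F : L[X]) (hF : 0 < F.natDegree) (γ : L)
    (hall : ∀ x, rootMultiplicity x (F - C γ) ≠ 1) :
    F.natDegree ≤ 2 * ∑ t ∈ (F - C γ).roots.toFinset, (derivative F).roots.count t := by
  have hdeg : (F - C γ).natDegree = F.natDegree := natDegree_sub_C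
  have h0 : F - C γ ≠ 0 := ne_zero_of_natDegree_gt (n := 0) (by omega)
  have hd : derivative (F - C γ) = derivative F := by simp
  have hcard : Multiset.card (F - C γ).roots = F.natDegree := by
    rw [← hdeg]
    exact splits_iff_card_roots.1 (IsAlgClosed.splits _)
  have key : ∀ t ∈ (F - C γ).roots.toFinset,
      (F - C γ).roots.count t ≤ 2 * (derivative F).roots.count t := by
    intro t ht
    have htr : (F - C γ).IsRoot t := isRoot_of_mem_roots (Multiset.mem_toFinset.1 ht)
    have hm : 0 < rootMultiplicity t (F - C γ) := (rootMultiplicity_pos h0).2 htr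
    have hm2 : 2 ≤ rootMultiplicity t (F - C γ) := by have := hall t; omega
    rw [count_roots, count_roots, ← hd, derivative_rootMultiplicity_of_root htr]
    omega
  calc F.natDegree = Multiset.card (F - C γ).roots := hcard.symm
    _ = ∑ t ∈ (F - C γ).roots.toFinset, (F - C γ).roots.count t :=
        ((F - C γ).roots.toFinset_sum_count_eq).symm
    _ ≤ ∑ t ∈ (F - C γ).roots.toFinset, 2 * (derivative F).roots.count t :=
        Finset.sum_le_sum key
    _ = 2 * ∑ t ∈ (F - C γ).roots.toFinset, (derivative F).roots.count t := by
        rw [Finset.mul_sum]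

private lemma exists_simple_root_comp {L : Type*} [Field L] [CharZero L] [IsAlgClosed L]
    (A F : L[X]) (hF : 0 < F.natDegree) {α β : L} (hab : α ≠ β)
    (h1 : rootMultiplicity α A = 1) (h2 : rootMultiplicity β A = 1) :
    ∃ x₀, rootMultiplicity x₀ (A.comp F) = 1 := by
  classical
  -- first find a simple root of F - C α or F - C β
  have hx : ∃ x₀, rootMultiplicity x₀ (F - C α) = 1 ∨ rootMultiplicity x₀ (F - C β) = 1 := by
    by_contra hcon
    push_neg at hcon
    have hca := count_aux F hF α (fun x => (hcon x).1)
    have hcb := count_aux F hF β (fun x => (hcon x).2)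
    have hF'0 : derivative F ≠ 0 := by
      intro e
      have := natDegree_eq_zero_of_derivative_eq_zero e
      omega
    have hdisj : Disjoint (F - C α).roots.toFinset (F - C β).roots.toFinset := by
      rw [Finset.disjoint_left]
      intro t ht ht'
      have e1 : eval t (F - C α) = 0 := isRoot_of_mem_roots (Multiset.mem_toFinset.1 ht)
      have e2 : eval t (F - C β) = 0 := isRoot_of_mem_roots (Multiset.mem_toFinset.1 ht')
      simp only [eval_sub, eval_C] at e1 e2
      rw [sub_eq_zero] at e1 e2
      exact hab (e1.symm.trans e2)
    have hsum : ∑ t ∈ (F - C α).roots.toFinset, (derivative F).roots.count t +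
        ∑ t ∈ (F - C β).roots.toFinset, (derivative F).roots.count t ≤
        Multiset.card (derivative F).roots := by
      rw [← Finset.sum_union hdisj]
      exact sum_count_le _ _
    have hcard' : Multiset.card (derivative F).roots ≤ F.natDegree - 1 := by
      have h1' := (derivative F).card_roots' 
      have h2' := natDegree_derivative_lt (p := F) (by omega)
      omega
    omega
  obtain ⟨x₀, hx₀⟩ := hx
  -- now lift to A.comp F
  have main : ∀ γ : L, rootMultiplicity γ A = 1 → rootMultiplicity x₀ (F - C γ) = 1 →
      rootMultiplicity x₀ (A.comp F) = 1 := by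
    intro γ hγ hxγ
    have hA0 : A ≠ 0 := by intro e; rw [e, rootMultiplicity_zero] at hγ; omega
    have hfac := pow_mul_divByMonic_rootMultiplicity_eq A γ
    have heval := eval_divByMonic_pow_rootMultiplicity_ne_zero (p := A) γ hA0
    rw [hγ, pow_one] at hfac heval
    set e := A /ₘ (X - C γ) with he
    have hcomp : A.comp F = (F - C γ) * e.comp F := by
      rw [← hfac]; simp [mul_comp, sub_comp]
    have hFγ : eval x₀ (F - C γ) = 0 := by
      have : 0 < rootMultiplicity x₀ (F - C γ) := by omega
      have h0 : F - C γ ≠ 0 := by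
        intro hz; rw [hz, rootMultiplicity_zero] at hxγ; omega
      exact (rootMultiplicity_pos h0).1 this
    have hecomp : eval x₀ (e.comp F) ≠ 0 := by
      rw [eval_comp]
      have : eval x₀ F = γ := by
        simp only [eval_sub, eval_C, sub_eq_zero] at hFγ; exact hFγ
      rw [this]; exact heval
    have hne : (F - C γ) * e.comp F ≠ 0 := by
      apply mul_ne_zero
      · intro hz; rw [hz, rootMultiplicity_zero] at hxγ; omega
      · intro hz; rw [hz] at hecomp; simp at hecomp
    rw [hcomp, rootMultiplicity_mul hne, hxγ,
      rootMultiplicity_eq_zero (by simpa [IsRoot] using hecomp)]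
  rcases hx₀ with h | h
  · exact ⟨x₀, main α h1 h⟩
  · exact ⟨x₀, main β h2 h⟩
private lemma main_aux {K L : Type*} [Field K] [CharZero K] [Field L] [CharZero L]
    [IsAlgClosed L] [Algebra K L]
    (a b : Polynomial K) (c : Polynomial (Polynomial K))
    (hc : 0 < c.natDegree)
    {α β : L} (hαβ : α ≠ β)
    (hα : rootMultiplicity α (a.map (algebraMap K L)) = 1)
    (hβ : rootMultiplicity β (a.map (algebraMap K L)) = 1)
    (hgcd : IsRelPrime a (c.leadingCoeff * b))
    (hprim : (Polynomial.C a * c + Polynomial.C b).IsPrimitive)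
    (f g : Polynomial K) (hf : 0 < f.natDegree) (hg : 0 < g.natDegree) :
    Irreducible (substXY f g (Polynomial.C a * c + Polynomial.C b)) := by
  classical
  set φ : K →+* L := algebraMap K L with hφ
  set p : Polynomial (Polynomial K) := C a * c + C b with hp
  set σ : Polynomial K →+* Polynomial K := (aeval f).toRingHom with hσdef
  have hσ_apply : ∀ r : Polynomial K, σ r = r.comp f := fun r => rfl
  -- basic nonvanishing facts
  have ha0 : a ≠ 0 := by
    intro e; rw [e, Polynomial.map_zero, rootMultiplicity_zero] at hα; omega
  have hc0 : c ≠ 0 := fun e => by simp [e] at hc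
  have hg0 : g ≠ 0 := fun e => by simp [e] at hg
  have hσ0 : ∀ r : Polynomial K, r ≠ 0 → σ r ≠ 0 := by
    intro r hr hz
    rw [hσ_apply, comp_eq_zero_iff] at hz
    rcases hz with h | ⟨-, h⟩
    · exact hr h
    · have := natDegree_C (f.coeff 0); rw [← h] at this; omega
  have hσinj : Function.Injective σ := by
    intro r s hrs
    by_contra hne
    exact hσ0 (r - s) (sub_ne_zero.2 hne) (by rw [map_sub, hrs, sub_self])
  -- structure of the substituted polynomial
  set Ch : Polynomial (Polynomial K) := (c.map σ).comp (g.map Polynomial.C) with hCh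
  have hq : substXY f g p = C (σ a) * Ch + C (σ b) := by
    rw [substXY, hp]
    simp only [Polynomial.map_add, Polynomial.map_mul, map_C, add_comp, mul_comp, C_comp, hCh]
    rfl
  -- degrees
  have hdeg_gC : (g.map (Polynomial.C : K →+* Polynomial K)).natDegree = g.natDegree :=
    natDegree_map_eq_of_injective C_injective g
  have hdeg_cσ : (c.map σ).natDegree = c.natDegree := natDegree_map_eq_of_injective hσinj c
  have hdegCh : Ch.natDegree = c.natDegree * g.natDegree := by
    rw [hCh, natDegree_comp, hdeg_cσ, hdeg_gC]
  have hD1 : 0 < c.natDegree * g.natDegree := Nat.mul_pos hc hg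
  have hlcCh : Ch.leadingCoeff = σ c.leadingCoeff * Polynomial.C g.leadingCoeff ^ c.natDegree := by
    rw [hCh, leadingCoeff_comp (by rw [hdeg_gC]; omega), leadingCoeff_map_of_injective hσinj,
      leadingCoeff_map_of_injective C_injective, hdeg_cσ]
  have hA0 : σ a ≠ 0 := hσ0 a ha0
  have hCA0 : (Polynomial.C (σ a) : Polynomial (Polynomial K)) ≠ 0 := by
    simpa using hA0
  have hCh0 : Ch ≠ 0 := by
    intro e; rw [e, natDegree_zero] at hdegCh; omega
  have hdeg_lt : (Polynomial.C (σ b)).degree < (Polynomial.C (σ a) * Ch).degree := by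
    refine lt_of_le_of_lt degree_C_le ?_
    rw [← natDegree_pos_iff_degree_pos, natDegree_C_mul hA0, hdegCh]
    omega
  have hdegq : (substXY f g p).natDegree = c.natDegree * g.natDegree := by
    rw [hq, natDegree_eq_of_degree_eq (degree_add_eq_left_of_degree_lt hdeg_lt),
      natDegree_C_mul hA0, hdegCh]
  have hq0 : substXY f g p ≠ 0 := by
    intro e; rw [e, natDegree_zero] at hdegq; omega
  have hlcq : (substXY f g p).leadingCoeff = σ a * Ch.leadingCoeff := by
    rw [hq, add_comm, leadingCoeff_add_of_degree_lt hdeg_lt, leadingCoeff_mul, leadingCoeff_C]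
  -- the evaluation identity
  have evmap : ∀ x₁ : L, (substXY f g p).map ((evalRingHom x₁).comp (mapRingHom φ)) =
      Polynomial.C (eval (eval x₁ (f.map φ)) (a.map φ)) *
        ((c.map ((evalRingHom (eval x₁ (f.map φ))).comp (mapRingHom φ))).comp (g.map φ)) +
      Polynomial.C (eval (eval x₁ (f.map φ)) (b.map φ)) := by
    intro x₁
    have e1 : ((evalRingHom x₁).comp (mapRingHom φ)).comp σ =
        (evalRingHom (eval x₁ (f.map φ))).comp (mapRingHom φ) := by
      apply Polynomial.ringHom_ext
      · intro r
        simp [hσ_apply]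
      · simp [hσ_apply]
    have e2 : ((evalRingHom x₁).comp (mapRingHom φ)).comp (Polynomial.C : K →+* Polynomial K)
        = φ := by
      apply RingHom.ext; intro r; simp
    rw [substXY, Polynomial.map_comp, Polynomial.map_map, Polynomial.map_map, e1, e2, hp]
    simp only [Polynomial.map_add, Polynomial.map_mul, map_C, add_comp, mul_comp, C_comp]
    simp [RingHom.comp_apply]
  -- aeval bridge
  have haev : ∀ t : L, ∀ r : Polynomial K, eval t (r.map φ) = 0 → (aeval t) r = 0 := by
    intro t r h; rwa [aeval_def, ← eval_map]
  -- non-primitivity contradiction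
  have hp0 : p ≠ 0 := by
    intro e
    have : IsUnit (X : Polynomial K) := hprim X (by rw [e]; exact dvd_zero _)
    exact not_isUnit_X this
  have primContra : ∀ t : L, (∀ j, eval t ((p.coeff j).map φ) = 0) → False := by
    intro t hall
    obtain ⟨j, hj⟩ : ∃ j, p.coeff j ≠ 0 := by
      by_contra h; push_neg at h
      exact hp0 (Polynomial.ext fun j => by rw [h j, coeff_zero])
    have hint : IsIntegral K t := IsAlgebraic.isIntegral ⟨p.coeff j, hj, haev _ _ (hall j)⟩
    have hdvd : Polynomial.C (minpoly K t) ∣ p := by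
      rw [Polynomial.C_dvd_iff_dvd_coeff]
      intro i; exact minpoly.dvd K t (haev _ _ (hall i))
    exact (minpoly.not_isUnit K t) (hprim _ hdvd)
  -- roots of a are not roots of lc c or b
  have rootOfA : ∀ t : L, eval t (a.map φ) = 0 →
      eval t (c.leadingCoeff.map φ) ≠ 0 ∧ eval t (b.map φ) ≠ 0 := by
    intro t ht
    have hma : minpoly K t ∣ a := minpoly.dvd K t (haev _ _ ht)
    have hint : IsIntegral K t := IsAlgebraic.isIntegral ⟨a, ha0, haev _ _ ht⟩
    have hnu : ¬ IsUnit (minpoly K t) := minpoly.not_isUnit K t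
    constructor
    · intro hcd
      exact hnu (hgcd hma ((minpoly.dvd K t (haev _ _ hcd)).mul_right b))
    · intro hb
      exact hnu (hgcd hma ((minpoly.dvd K t (haev _ _ hb)).mul_left c.leadingCoeff))
  -- a simple root of a ∘ f over L
  obtain ⟨x₀, hx₀⟩ := exists_simple_root_comp (a.map φ) (f.map φ)
      (by rwa [natDegree_map_eq_of_injective φ.injective]) hαβ hα hβ
  set t₀ := eval x₀ (f.map φ) with ht₀def
  have hcompne : (a.map φ).comp (f.map φ) ≠ 0 := by
    intro e; rw [e, rootMultiplicity_zero] at hx₀; omega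
  have hx₀root : eval x₀ ((a.map φ).comp (f.map φ)) = 0 :=
    (rootMultiplicity_pos hcompne).1 (by omega)
  have hat₀ : eval t₀ (a.map φ) = 0 := by rwa [eval_comp] at hx₀root
  obtain ⟨hcd₀, hb₀⟩ := rootOfA _ hat₀
  constructor
  · intro hu
    have := natDegree_eq_zero_of_isUnit hu
    omega
  intro P Q hPQ
  by_contra hcon
  push_neg at hcon
  obtain ⟨hPnu, hQnu⟩ := hcon
  have hP0 : P ≠ 0 := fun e => hq0 (by rw [hPQ, e, zero_mul])
  have hQ0 : Q ≠ 0 := fun e => hq0 (by rw [hPQ, e, mul_zero])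
  -- the constant-factor case
  have constCase : ∀ P' Q' : Polynomial (Polynomial K), substXY f g p = P' * Q' →
      P'.natDegree = 0 → ¬ IsUnit P' → False := by
    intro P' Q' hPQ' hdeg0 hnu
    have hP'0 : P' ≠ 0 := fun e => hq0 (by rw [hPQ', e, zero_mul])
    have hu : P' = Polynomial.C (P'.coeff 0) := Polynomial.eq_C_of_natDegree_eq_zero hdeg0
    set u := P'.coeff 0 with hudef
    have hu0 : u ≠ 0 := fun e => hP'0 (by rw [hu, e, map_zero])
    have hunu : ¬ IsUnit u := fun h => hnu (by rw [hu]; exact isUnit_C.2 h)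
    have hdegu : (u.map φ).degree ≠ 0 := by
      rw [degree_map_eq_of_injective φ.injective]
      intro e; exact hunu (isUnit_iff_degree_eq_zero.2 e)
    obtain ⟨x₁, hx₁⟩ := IsAlgClosed.exists_root (u.map φ) hdegu
    have hux : eval x₁ (u.map φ) = 0 := hx₁
    have hmap0 : (substXY f g p).map ((evalRingHom x₁).comp (mapRingHom φ)) = 0 := by
      rw [hPQ', Polynomial.map_mul, hu, Polynomial.map_C]
      have h0 : ((evalRingHom x₁).comp (mapRingHom φ)) u = 0 := hux
      rw [h0, map_zero, zero_mul]
    rw [evmap x₁] at hmap0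
    set t := eval x₁ (f.map φ) with htdef
    apply primContra t
    have pcoeff : ∀ j, p.coeff j = a * c.coeff j + (Polynomial.C b).coeff j := by
      intro j; rw [hp, coeff_add, coeff_C_mul]
    have e'coeff : ∀ j, (c.map ((evalRingHom t).comp (mapRingHom φ))).coeff j
        = eval t ((c.coeff j).map φ) := fun j => coeff_map _ j
    by_cases hat : eval t (a.map φ) = 0
    · rw [hat, map_zero, zero_mul, zero_add] at hmap0
      have hbt : eval t (b.map φ) = 0 := C_eq_zero.1 hmap0
      intro j
      rw [pcoeff j, Polynomial.map_add, Polynomial.map_mul, eval_add, eval_mul, hat,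
        zero_mul, zero_add]
      rcases j with _ | j
      · simpa using hbt
      · simp [coeff_C]
    · set M := (c.map ((evalRingHom t).comp (mapRingHom φ))).comp (g.map φ) with hM
      have h1 : Polynomial.C (eval t (a.map φ)) * M = Polynomial.C (-(eval t (b.map φ))) := by
        rw [map_neg]; exact eq_neg_of_add_eq_zero_left hmap0
      have hMC : M = Polynomial.C ((eval t (a.map φ))⁻¹ * -(eval t (b.map φ))) := by
        rw [C_mul, ← h1, ← mul_assoc, ← C_mul, inv_mul_cancel₀ hat, C_1, one_mul]
      have hMdeg : M.natDegree = 0 := by rw [hMC, natDegree_C]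
      have hcmap : (c.map ((evalRingHom t).comp (mapRingHom φ))).natDegree = 0 := by
        rw [hM, natDegree_comp] at hMdeg
        have hgφ : (g.map φ).natDegree = g.natDegree := natDegree_map_eq_of_injective φ.injective g
        rw [hgφ] at hMdeg
        rcases Nat.mul_eq_zero.1 hMdeg with h | h
        · exact h
        · omega
      have hchigh : ∀ j, eval t ((c.coeff (j+1)).map φ) = 0 := by
        intro j
        rw [← e'coeff]
        exact coeff_eq_zero_of_natDegree_lt (by omega)
      have hMc0 : M = Polynomial.C (eval t ((c.coeff 0).map φ)) := by
        rw [← e'coeff 0, hM]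
        conv_lhs => rw [Polynomial.eq_C_of_natDegree_eq_zero hcmap]
        rw [C_comp]
      have hkey : eval t (a.map φ) * eval t ((c.coeff 0).map φ) = -(eval t (b.map φ)) := by
        apply C_injective
        rw [C_mul, ← hMc0, h1]
      intro j
      rw [pcoeff j, Polynomial.map_add, Polynomial.map_mul, eval_add, eval_mul]
      rcases j with _ | j
      · have : ((Polynomial.C b).coeff 0) = b := coeff_C_zero
        rw [this, hkey]
        ring
      · rw [hchigh j, mul_zero]
        simp [coeff_C]
  rcases Nat.eq_zero_or_pos P.natDegree with hPd | hPd
  · exact constCase P Q hPQ hPd hPnu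
  rcases Nat.eq_zero_or_pos Q.natDegree with hQd | hQd
  · exact constCase Q P (by rw [hPQ, mul_comm]) hQd hQnu
  -- both factors have positive degree: contradiction via the simple root x₀
  have hmapq0 : (substXY f g p).map ((evalRingHom x₀).comp (mapRingHom φ))
      = Polynomial.C (eval t₀ (b.map φ)) := by
    rw [evmap x₀, ← ht₀def, hat₀, map_zero, zero_mul, zero_add]
  have hPQm : (P.map ((evalRingHom x₀).comp (mapRingHom φ)))
      * (Q.map ((evalRingHom x₀).comp (mapRingHom φ))) = Polynomial.C (eval t₀ (b.map φ)) := by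
    rw [← Polynomial.map_mul, ← hPQ, hmapq0]
  have hPm0 : P.map ((evalRingHom x₀).comp (mapRingHom φ)) ≠ 0 := by
    intro e; rw [e, zero_mul] at hPQm; exact hb₀ (C_eq_zero.1 hPQm.symm)
  have hQm0 : Q.map ((evalRingHom x₀).comp (mapRingHom φ)) ≠ 0 := by
    intro e; rw [e, mul_zero] at hPQm; exact hb₀ (C_eq_zero.1 hPQm.symm)
  have hdegs : (P.map ((evalRingHom x₀).comp (mapRingHom φ))).natDegree = 0 ∧
      (Q.map ((evalRingHom x₀).comp (mapRingHom φ))).natDegree = 0 := by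
    have h := natDegree_mul hPm0 hQm0
    rw [hPQm, natDegree_C] at h
    omega
  have hlcP : eval x₀ (P.leadingCoeff.map φ) = 0 := by
    have h : (P.map ((evalRingHom x₀).comp (mapRingHom φ))).coeff P.natDegree = 0 :=
      coeff_eq_zero_of_natDegree_lt (by omega)
    rw [coeff_map] at h
    simpa using h
  have hlcQ : eval x₀ (Q.leadingCoeff.map φ) = 0 := by
    have h : (Q.map ((evalRingHom x₀).comp (mapRingHom φ))).coeff Q.natDegree = 0 :=
      coeff_eq_zero_of_natDegree_lt (by omega)
    rw [coeff_map] at h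
    simpa using h
  have hlcne : ((substXY f g p).leadingCoeff).map φ ≠ 0 := by
    rw [Ne, Polynomial.map_eq_zero_iff φ.injective]
    exact leadingCoeff_ne_zero.2 hq0
  have h2 : (X - Polynomial.C x₀)^2 ∣ ((substXY f g p).leadingCoeff).map φ := by
    have hl : (substXY f g p).leadingCoeff = P.leadingCoeff * Q.leadingCoeff := by
      rw [hPQ, leadingCoeff_mul]
    rw [hl, Polynomial.map_mul, sq]
    exact mul_dvd_mul (dvd_iff_isRoot.2 hlcP) (dvd_iff_isRoot.2 hlcQ)
  have hrm2 : 2 ≤ rootMultiplicity x₀ (((substXY f g p).leadingCoeff).map φ) :=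
    (le_rootMultiplicity_iff hlcne).2 h2
  have hσa_map : (σ a).map φ = (a.map φ).comp (f.map φ) := by
    rw [hσ_apply, Polynomial.map_comp]
  have hrma : rootMultiplicity x₀ ((σ a).map φ) = 1 := by rw [hσa_map]; exact hx₀
  have hevallc : eval x₀ ((Ch.leadingCoeff).map φ) ≠ 0 := by
    rw [hlcCh, Polynomial.map_mul, eval_mul]
    apply mul_ne_zero
    · rw [hσ_apply, Polynomial.map_comp, eval_comp, ← ht₀def]
      exact hcd₀
    · rw [Polynomial.map_pow, Polynomial.map_C, eval_pow, eval_C]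
      refine pow_ne_zero _ ?_
      intro h
      exact leadingCoeff_ne_zero.2 hg0 (φ.injective (by rw [h, map_zero]))
  have hmulne : ((σ a).map φ) * ((Ch.leadingCoeff).map φ) ≠ 0 := by
    apply mul_ne_zero
    · rw [Ne, Polynomial.map_eq_zero_iff φ.injective]; exact hA0
    · intro e; rw [e] at hevallc; simp at hevallc
  have hrmtot : rootMultiplicity x₀ (((substXY f g p).leadingCoeff).map φ) = 1 := by
    rw [hlcq, Polynomial.map_mul, rootMultiplicity_mul hmulne, hrma,
      rootMultiplicity_eq_zero hevallc]
  omega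

/-- Theorem 2.10: over a field of characteristic zero, a primitive `p = a(x)c(x,y)+b(x)`
with `gcd(a, c_d·b) = 1` and `a` having at least two simple roots in the algebraic
closure is a HIP polynomial. -/
theorem stmt8 {K : Type*} [Field K] [CharZero K]
    (a b : Polynomial K) (c : Polynomial (Polynomial K))
    (hc : 0 < c.natDegree)
    (ha : ∃ α β : AlgebraicClosure K, α ≠ β ∧
      rootMultiplicity α (a.map (algebraMap K (AlgebraicClosure K))) = 1 ∧
      rootMultiplicity β (a.map (algebraMap K (AlgebraicClosure K))) = 1)
    (hgcd : IsRelPrime a (c.leadingCoeff * b))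
    (hprim : (Polynomial.C a * c + Polynomial.C b).IsPrimitive) :
    ∀ f g : Polynomial K, 0 < f.natDegree → 0 < g.natDegree →
      Irreducible (substXY f g (Polynomial.C a * c + Polynomial.C b)) := by
  intro f g hf hg
  haveI : CharZero (AlgebraicClosure K) :=
    charZero_of_injective_algebraMap (algebraMap K (AlgebraicClosure K)).injective
  obtain ⟨α, β, hαβ, hα, hβ⟩ := ha
  exact main_aux a b c hc hαβ hα hβ hgcd hprim f g hf hg
end

section
/- Over the field 𝔽_p, the polynomial p(x,y) = (x² − 1)y − 1 is not HIP: substituting x ↦ x^p and y ↦ y^p yields (x^{2p} − 1)y^p − 1 = ((x² − 1)y)^p − 1, which is reducible in 𝔽_p[x,y] (being divisible by (x² − 1)y − 1). -/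
/-!
Over a finite field `K` with `q` elements every coefficient satisfies `a ^ q = a`, so substituting
`x ↦ x ^ q`, `y ↦ y ^ q` is the `q`-th power map of `K[x][y]`. Hence the substituted polynomial is
`P ^ p`, which is divisible by `P` and, being a proper power, is not irreducible.
-/

open Polynomial

theorem substXY_X_pow_card_eq_pow {K : Type*} [Field K] [Fintype K] (P : K[X][X]) :
    substXY (X ^ Fintype.card K) (X ^ Fintype.card K) P = P ^ Fintype.card K := by
  obtain ⟨p, _⟩ := CharP.exists K
  obtain ⟨n, hp, hcard⟩ := FiniteField.card K p
  have : Fact p.Prime := ⟨hp⟩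
  have aeval_eq_frobenius :
      (aeval (X ^ Fintype.card K : K[X])).toRingHom = iterateFrobenius K[X] p n :=
    RingHom.ext fun a => by
      rw [iterateFrobenius_def, ← hcard]
      exact FiniteField.expand_card a
  rw [substXY, aeval_eq_frobenius, Polynomial.map_pow, map_X, ← expand_eq_comp_X_pow, hcard,
    ← map_expand, map_iterateFrobenius_expand]

/-- Remark after Theorem 2.10: over `𝔽_p` the polynomial `(x² - 1)y - 1` is not HIP:
substituting `x ↦ x^p`, `y ↦ y^p` gives `(x^{2p} - 1)y^p - 1 = ((x² - 1)y)^p - 1`,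
which is divisible by `(x² - 1)y - 1` and reducible. -/
theorem stmt9 (p : ℕ) [Fact p.Prime] :
    substXY ((X : Polynomial (ZMod p)) ^ p) ((X : Polynomial (ZMod p)) ^ p)
        (Polynomial.C ((X : Polynomial (ZMod p)) ^ 2 - 1) * Polynomial.X - 1)
      = (Polynomial.C ((X : Polynomial (ZMod p)) ^ 2 - 1) * Polynomial.X) ^ p - 1 ∧
    (Polynomial.C ((X : Polynomial (ZMod p)) ^ 2 - 1) * Polynomial.X - 1) ∣
      substXY ((X : Polynomial (ZMod p)) ^ p) ((X : Polynomial (ZMod p)) ^ p)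
        (Polynomial.C ((X : Polynomial (ZMod p)) ^ 2 - 1) * Polynomial.X - 1) ∧
    ¬ Irreducible
      (substXY ((X : Polynomial (ZMod p)) ^ p) ((X : Polynomial (ZMod p)) ^ p)
        (Polynomial.C ((X : Polynomial (ZMod p)) ^ 2 - 1) * Polynomial.X - 1)) := by
  have hp : p.Prime := Fact.out
  set P : (ZMod p)[X][X] := C (X ^ 2 - 1) * X - 1
  have subst_eq_pow : substXY (X ^ p) (X ^ p) P = P ^ p := by
    simpa only [ZMod.card] using substXY_X_pow_card_eq_pow P
  rw [subst_eq_pow]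
  exact ⟨by rw [sub_pow_char, one_pow], dvd_pow_self P hp.ne_zero, not_irreducible_pow hp.ne_one⟩
end

section
/- Let φ(x,y) = (u(x,y), v(x,y)) be a K-algebra automorphism of K[x,y], and suppose F(x,y) = u·Q(u,v) + r(u), where r(u) ∈ K[u] with r(0) ≠ 0, Q(u,v) = Σⱼ₌₀^d pⱼ(u)vʲ with u ∤ p_d(u), and F is primitive as a polynomial in v over K[u]. Then F(x,y) is absolutely irreducible. -/
open Polynomial


/-- Key algebraic lemma: generalized Eisenstein over a field. -/
lemma keyIrred {L : Type*} [Field L] (Q : Polynomial (Polynomial L)) (r : Polynomial L)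
    (hQd : 0 < Q.natDegree) (hr : r.eval 0 ≠ 0)
    (hlead : ¬ (X : Polynomial L) ∣ Q.leadingCoeff)
    (hprim : (C (X : Polynomial L) * Q + C r).IsPrimitive) :
    Irreducible (C (X : Polynomial L) * Q + C r) := by
  set G : Polynomial (Polynomial L) := C (X : Polynomial L) * Q + C r with hG
  have hQ0 : Q ≠ 0 := fun h => by simp [h] at hQd
  have hX0 : (X : Polynomial L) ≠ 0 := X_ne_zero
  set d := Q.natDegree with hd
  have hCXQ : (C (X : Polynomial L) * Q).natDegree = d := natDegree_C_mul hX0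
  have hGdeg : G.natDegree = d := by
    rw [hG, natDegree_add_eq_left_of_natDegree_lt, hCXQ]
    rw [hCXQ, natDegree_C]; exact hQd
  have hGcoeffd : G.coeff d = X * Q.leadingCoeff := by
    rw [hG, coeff_add, coeff_C_mul, coeff_C, if_neg hQd.ne', add_zero,
      leadingCoeff]
  have hG0 : G ≠ 0 := by
    intro h
    apply hlead
    have : G.coeff d = 0 := by rw [h, coeff_zero]
    rw [hGcoeffd] at this
    rcases mul_eq_zero.mp this with h' | h'
    · exact absurd h' hX0
    · exact h' ▸ dvd_zero _
  -- the "reduction mod X" map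
  set ε : Polynomial L →+* L := evalRingHom (0 : L) with hε
  have hεG : G.map ε = C (r.eval 0) := by
    rw [hG, Polynomial.map_add, Polynomial.map_mul, map_C, map_C]
    simp [hε]
  constructor
  · exact not_isUnit_of_natDegree_pos G (hGdeg ▸ hQd)
  · rintro A B hAB
    have hA0 : A ≠ 0 := fun h => hG0 (by rw [hAB, h, zero_mul])
    have hB0 : B ≠ 0 := fun h => hG0 (by rw [hAB, h, mul_zero])
    -- images mod X are units
    have hmul : (A.map ε) * (B.map ε) = C (r.eval 0) := by
      rw [← Polynomial.map_mul, ← hAB, hεG]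
    have hCu : IsUnit (C (r.eval 0) : Polynomial L) := isUnit_C.mpr (isUnit_iff_ne_zero.mpr hr)
    have hAu : IsUnit (A.map ε) := isUnit_of_mul_isUnit_left (hmul ▸ hCu)
    have hBu : IsUnit (B.map ε) := isUnit_of_mul_isUnit_right (hmul ▸ hCu)
    -- coefficients in positive degree are divisible by X
    have hdvd : ∀ (P : Polynomial (Polynomial L)), IsUnit (P.map ε) → ∀ i, 0 < i →
        (X : Polynomial L) ∣ P.coeff i := by
      intro P hPu i hi
      have h1 : (P.map ε).coeff i = 0 :=
        coeff_eq_zero_of_natDegree_lt (by rw [natDegree_eq_zero_of_isUnit hPu]; exact hi)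
      rw [coeff_map] at h1
      rw [X_dvd_iff, coeff_zero_eq_eval_zero]
      exact h1
    -- one of the factors has natDegree 0
    have hcase : A.natDegree = 0 ∨ B.natDegree = 0 := by
      by_contra h
      push_neg at h
      obtain ⟨hA, hB⟩ := h
      have hA1 : 0 < A.natDegree := Nat.pos_of_ne_zero hA
      have hB1 : 0 < B.natDegree := Nat.pos_of_ne_zero hB
      have hsum : A.natDegree + B.natDegree = d := by
        rw [← hGdeg, hAB, natDegree_mul hA0 hB0]
      have hcoeff : A.leadingCoeff * B.leadingCoeff = X * Q.leadingCoeff := by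
        rw [← hGcoeffd, hAB, ← hsum, coeff_mul_degree_add_degree]
      obtain ⟨s, hs⟩ := hdvd A hAu A.natDegree hA1
      obtain ⟨t, ht⟩ := hdvd B hBu B.natDegree hB1
      apply hlead
      refine ⟨s * t, mul_left_cancel₀ hX0 ?_⟩
      rw [← hcoeff, leadingCoeff, leadingCoeff, hs, ht]; ring
    rcases hcase with h | h
    · left
      have hAC : A = C (A.coeff 0) := eq_C_of_natDegree_eq_zero h
      have : C (A.coeff 0) ∣ G := ⟨B, by rw [hAB, ← hAC]⟩
      rw [hAC]
      exact isUnit_C.mpr (hprim _ this)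
    · right
      have hBC : B = C (B.coeff 0) := eq_C_of_natDegree_eq_zero h
      have : C (B.coeff 0) ∣ G := ⟨A, by rw [hAB, ← hBC, mul_comm]⟩
      rw [hBC]
      exact isUnit_C.mpr (hprim _ this)

/-- Primitivity transfers along a field embedding of the coefficient field. -/
lemma primMap {K L : Type*} [Field K] [Field L] (f : K →+* L)
    {p : Polynomial (Polynomial K)} (hp : p.IsPrimitive) :
    (p.map (mapRingHom f)).IsPrimitive := by
  intro c hc
  -- 1 lies in the ideal generated by the coefficients of p
  set I : Ideal (Polynomial K) := Ideal.span (Set.range p.coeff) with hI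
  have hItop : I = ⊤ := by
    obtain ⟨g, hg⟩ := (inferInstance : I.IsPrincipal)
    have hgd : ∀ i, g ∣ p.coeff i := by
      intro i
      rw [← Ideal.mem_span_singleton, ← Ideal.submodule_span_eq, ← hg]
      exact Ideal.subset_span ⟨i, rfl⟩
    have : IsUnit g := hp g ((C_dvd_iff_dvd_coeff g p).mpr hgd)
    rw [hI] at hg ⊢
    rw [hg, Ideal.submodule_span_eq, Ideal.span_singleton_eq_top]
    exact this
  have h1 : (1 : Polynomial K) ∈ I := hItop ▸ Submodule.mem_top
  -- c divides every coefficient of the mapped polynomial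
  have hcd : ∀ i, c ∣ (p.map (mapRingHom f)).coeff i := (C_dvd_iff_dvd_coeff c _).mp hc
  have hcd' : ∀ i, c ∣ (mapRingHom f) (p.coeff i) := by
    intro i
    have := hcd i
    rwa [coeff_map] at this
  -- hence c divides the image of 1
  have : c ∣ (mapRingHom f) 1 := by
    refine Submodule.span_induction ?_ ?_ ?_ ?_ h1
    · rintro x ⟨i, rfl⟩; exact hcd' i
    · simp
    · intro x y _ _ hx hy; rw [map_add]; exact dvd_add hx hy
    · intro a x _ hx
      rw [smul_eq_mul, map_mul]
      exact Dvd.dvd.mul_left hx _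
  rw [map_one] at this
  exact isUnit_of_dvd_one this

section Transfer

variable {K : Type*} [Field K] {L : Type*} [CommRing L] (f : K →+* L)

/-- Base change of `K[x][y]` along `f`. -/
noncomputable def iot : Polynomial (Polynomial K) →+* Polynomial (Polynomial L) :=
  mapRingHom (mapRingHom f)

/-- The endomorphism of `L[x][y]` sending `x ↦ u`, `y ↦ v`. -/
noncomputable def Phi (u v : Polynomial (Polynomial L)) :
    Polynomial (Polynomial L) →+* Polynomial (Polynomial L) :=
  eval₂RingHom (eval₂RingHom (C.comp C) u) v

@[simp] lemma Phi_CC (u v : Polynomial (Polynomial L)) (a : L) :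
    Phi u v (C (C a)) = C (C a) := by
  simp [Phi]

@[simp] lemma Phi_CX (u v : Polynomial (Polynomial L)) :
    Phi u v (C X) = u := by
  simp [Phi]

@[simp] lemma Phi_X (u v : Polynomial (Polynomial L)) :
    Phi u v X = v := by
  simp [Phi]

@[simp] lemma iot_CC (k : K) : iot f (C (C k)) = C (C (f k)) := by
  simp [iot]

@[simp] lemma iot_CX : iot f (C (X : Polynomial K)) = C (X : Polynomial L) := by
  simp [iot]

@[simp] lemma iot_X : iot f (X : Polynomial (Polynomial K)) = (X : Polynomial (Polynomial L)) := by
  simp [iot]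

lemma phi_CC (φ : Polynomial (Polynomial K) ≃ₐ[K] Polynomial (Polynomial K)) (k : K) :
    φ (C (C k)) = C (C k) := by
  have h : (algebraMap K (Polynomial (Polynomial K))) k = C (C k) := by
    rw [Polynomial.algebraMap_apply, Polynomial.algebraMap_apply]
    simp
  rw [← h, AlgEquiv.commutes]

/-- The base-changed automorphism intertwines `iot`. -/
lemma Phi_comp (φ : Polynomial (Polynomial K) ≃ₐ[K] Polynomial (Polynomial K)) :
    (Phi (iot f (φ (C X))) (iot f (φ X))).comp (iot f)
      = (iot f).comp (φ : Polynomial (Polynomial K) →+* Polynomial (Polynomial K)) := by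
  have key : ((Phi (iot f (φ (C X))) (iot f (φ X))).comp (iot f)).comp C
      = ((iot f).comp (φ : Polynomial (Polynomial K) →+* Polynomial (Polynomial K))).comp C := by
    apply ringHom_ext
    · intro k
      simp [phi_CC φ k]
    · simp
  apply ringHom_ext
  · intro a
    exact RingHom.congr_fun key a
  · simp

lemma Phi_inv (φ : Polynomial (Polynomial K) ≃ₐ[K] Polynomial (Polynomial K)) :
    (Phi (iot f (φ (C X))) (iot f (φ X))).comp
      (Phi (iot f (φ.symm (C X))) (iot f (φ.symm X))) = RingHom.id _ := by
  have hc : ∀ P : Polynomial (Polynomial K),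
      Phi (iot f (φ (C X))) (iot f (φ X)) (iot f P) = iot f (φ P) :=
    fun P => RingHom.congr_fun (Phi_comp f φ) P
  have key : (((Phi (iot f (φ (C X))) (iot f (φ X))).comp
      (Phi (iot f (φ.symm (C X))) (iot f (φ.symm X)))).comp C)
      = (RingHom.id (Polynomial (Polynomial L))).comp C := by
    apply ringHom_ext
    · intro a
      simp
    · simp only [RingHom.comp_apply, RingHom.id_apply, Phi_CX]
      rw [hc (φ.symm (C X))]
      simp
  apply ringHom_ext
  · intro a
    exact RingHom.congr_fun key a
  · simp only [RingHom.comp_apply, RingHom.id_apply, Phi_X]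
    rw [hc (φ.symm X)]
    simp

/-- The base change of the automorphism `φ`, as a ring equivalence of `L[x][y]`. -/
noncomputable def PhiEquiv (φ : Polynomial (Polynomial K) ≃ₐ[K] Polynomial (Polynomial K)) :
    Polynomial (Polynomial L) ≃+* Polynomial (Polynomial L) :=
  RingEquiv.ofRingHom (Phi (iot f (φ (C X))) (iot f (φ X)))
    (Phi (iot f (φ.symm (C X))) (iot f (φ.symm X)))
    (Phi_inv f φ) (by simpa using Phi_inv f φ.symm)

end Transfer

/-- Proposition 3.1 (generalized Eisenstein criterion): let `φ` be a `K`-algebra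
automorphism of `K[x,y] = K[u][v]` and `F = φ(u·Q(u,v) + r(u))` with `r(0) ≠ 0`,
`u ∤ p_d(u)` (the leading `v`-coefficient of `Q`), and `u·Q + r` primitive in `v`.
Then `F` is absolutely irreducible. Here `K[x,y]` is modelled as `K[u][v]` with
`u` the inner variable (`Polynomial.C Polynomial.X`) and `v` the outer one. -/
theorem stmt10 {K : Type*} [Field K]
    (φ : Polynomial (Polynomial K) ≃ₐ[K] Polynomial (Polynomial K))
    (Q : Polynomial (Polynomial K)) (r : Polynomial K)
    (hQd : 0 < Q.natDegree)
    (hr : r.eval 0 ≠ 0)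
    (hlead : ¬ (Polynomial.X : Polynomial K) ∣ Q.leadingCoeff)
    (hprim : (Polynomial.C (Polynomial.X : Polynomial K) * Q + Polynomial.C r).IsPrimitive) :
    Irreducible ((φ (Polynomial.C (Polynomial.X : Polynomial K) * Q + Polynomial.C r)).map
      (Polynomial.mapRingHom (algebraMap K (AlgebraicClosure K)))) := by
  set L : Type _ := AlgebraicClosure K with hL
  set f : K →+* L := algebraMap K L with hf'
  have hf : Function.Injective f := f.injective
  set G : Polynomial (Polynomial K) := C (X : Polynomial K) * Q + C r with hGdef
  have hmapinj : Function.Injective (mapRingHom f) := by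
    simpa [coe_mapRingHom] using Polynomial.map_injective f hf
  have hGmap : iot f G = C (X : Polynomial L) * (Q.map (mapRingHom f)) + C (r.map f) := by
    rw [hGdef]
    simp only [iot, coe_mapRingHom, Polynomial.map_add, Polynomial.map_mul, map_C, map_X]
  -- hypotheses over L
  have hQd' : 0 < (Q.map (mapRingHom f)).natDegree := by
    rwa [natDegree_map_eq_of_injective hmapinj]
  have hr' : (r.map f).eval 0 ≠ 0 := by
    rw [eval_map, eval₂_at_zero, coeff_zero_eq_eval_zero]
    intro h
    exact hr (hf (by rw [h, map_zero]))
  have hlead' : ¬ (X : Polynomial L) ∣ (Q.map (mapRingHom f)).leadingCoeff := by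
    rw [leadingCoeff_map_of_injective hmapinj]
    intro hdvd
    apply hlead
    rw [X_dvd_iff] at hdvd ⊢
    rw [coe_mapRingHom, coeff_map] at hdvd
    exact hf (by rw [hdvd, map_zero])
  have hprim' : (C (X : Polynomial L) * (Q.map (mapRingHom f)) + C (r.map f)).IsPrimitive := by
    have := primMap f hprim
    have heq : G.map (mapRingHom f) = iot f G := rfl
    rwa [heq, hGmap] at this
  have hirr : Irreducible (iot f G) := by
    rw [hGmap]
    exact keyIrred _ _ hQd' hr' hlead' hprim'
  have hcomm : Phi (iot f (φ (C X))) (iot f (φ X)) (iot f G) = iot f (φ G) :=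
    RingHom.congr_fun (Phi_comp f φ) G
  have hgoal : Irreducible (Phi (iot f (φ (C X))) (iot f (φ X)) (iot f G)) := by
    have : Phi (iot f (φ (C X))) (iot f (φ X)) (iot f G) = (PhiEquiv f φ) (iot f G) := rfl
    rw [this]
    exact (MulEquiv.irreducible_iff (PhiEquiv f φ)).mpr hirr
  rw [hcomm] at hgoal
  exact hgoal
end

section
/- Let K be a field, h(x), g(x) ∈ K[x] with gcd(h,g) = 1, h having a simple root α in K̄, and f₁,...,fₙ ∈ K[x] distinct polynomials with Σᵢ deg fᵢ > 0. Then F(x,y) = h(x)·∏ᵢ₌₁ⁿ(y − fᵢ(x)) + g(x) is absolutely irreducible (provided it is primitive as a polynomial in y over K[x]). -/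
/-! Reversing `F` in `y` gives a polynomial whose leading coefficient `h·∏(-fᵢ) + g` does not
vanish at the simple root `α` of `h`, whose other coefficients are multiples of `h`, and whose
constant coefficient `h` vanishes at `α` to order exactly one. Eisenstein's criterion at the prime
`x - α` of `K̄[x]` makes the reversal irreducible, and since `F(x, 0) ≠ 0`, so is `F`. -/

open Polynomial

namespace Polynomial

section Reverse

variable {R : Type*}

theorem IsPrimitive.reverse [CommSemiring R] {p : R[X]} (hp : p.IsPrimitive) :
    p.reverse.IsPrimitive := by
  intro r hr
  refine hp r ((C_dvd_iff_dvd_coeff r p).mpr fun i => ?_)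
  simpa only [coeff_reverse, revAt_invol] using
    (C_dvd_iff_dvd_coeff r _).mp hr (revAt p.natDegree i)

theorem natDegree_reverse_of_coeff_zero_ne_zero [Semiring R] {p : R[X]} (hp : p.coeff 0 ≠ 0) :
    p.reverse.natDegree = p.natDegree := by
  rw [reverse_natDegree, natTrailingDegree_eq_zero.mpr (Or.inr hp), Nat.sub_zero]

variable [CommRing R] [IsDomain R]

theorem isUnit_of_isUnit_reverse {p : R[X]} (hp : p.coeff 0 ≠ 0) (hu : IsUnit p.reverse) :
    IsUnit p := by
  have hdeg : p.natDegree = 0 := by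
    rw [← natDegree_reverse_of_coeff_zero_ne_zero hp]
    exact natDegree_eq_zero_of_isUnit hu
  rw [eq_C_of_natDegree_eq_zero hdeg] at hu ⊢
  rwa [reverse_C] at hu

theorem irreducible_of_irreducible_reverse {p : R[X]} (hp : p.coeff 0 ≠ 0)
    (hirr : Irreducible p.reverse) : Irreducible p where
  not_isUnit hu := by
    obtain ⟨q, hq⟩ := hu.exists_right_inv
    refine hirr.not_isUnit (.of_mul_eq_one q.reverse ?_)
    rw [← reverse_mul_of_domain, hq, ← C_1, reverse_C]
  isUnit_or_isUnit a b hab := by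
    have ha : a.coeff 0 ≠ 0 := fun h0 => hp (by rw [hab, mul_coeff_zero, h0, zero_mul])
    have hb : b.coeff 0 ≠ 0 := fun h0 => hp (by rw [hab, mul_coeff_zero, h0, mul_zero])
    rw [hab, reverse_mul_of_domain] at hirr
    exact (hirr.isUnit_or_isUnit rfl).imp (isUnit_of_isUnit_reverse ha)
      (isUnit_of_isUnit_reverse hb)

end Reverse

section Primitive

theorem isPrimitive_of_span_range_coeff_eq_top {S : Type*} [CommSemiring S] {p : S[X]}
    (hp : Ideal.span (Set.range p.coeff) = ⊤) : p.IsPrimitive := by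
  intro r hr
  rw [← Ideal.span_singleton_eq_top, eq_top_iff, ← hp, Ideal.span_le]
  rintro _ ⟨i, rfl⟩
  exact Ideal.mem_span_singleton.mpr ((C_dvd_iff_dvd_coeff r p).mp hr i)

theorem IsPrimitive.span_range_coeff_eq_top {R : Type*} [CommRing R] [IsPrincipalIdealRing R]
    {p : R[X]} (hp : p.IsPrimitive) : Ideal.span (Set.range p.coeff) = ⊤ := by
  open Submodule.IsPrincipal in
  rw [← Ideal.span_singleton_generator (Ideal.span _), Ideal.span_singleton_eq_top]
  exact hp _ ((C_dvd_iff_dvd_coeff _ p).mpr fun i =>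
    (mem_iff_generator_dvd _).mp (Ideal.subset_span ⟨i, rfl⟩))

theorem IsPrimitive.map {R S : Type*} [CommRing R] [IsPrincipalIdealRing R] [CommRing S]
    (φ : R →+* S) {p : R[X]} (hp : p.IsPrimitive) : (p.map φ).IsPrimitive := by
  refine isPrimitive_of_span_range_coeff_eq_top ?_
  have hcoeff : Set.range (p.map φ).coeff = φ '' Set.range p.coeff := by
    rw [← Set.range_comp]
    ext
    simp [coeff_map]
  rw [hcoeff, ← Ideal.map_span, hp.span_range_coeff_eq_top, Ideal.map_top]

end Primitive

theorem coeff_C_mul_add_C {R : Type*} [Semiring R] (h g : R) (Q : R[X]) (k : ℕ) :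
    (C h * Q + C g).coeff k = h * Q.coeff k + if k = 0 then g else 0 := by
  rw [coeff_add, coeff_C_mul, coeff_C]

theorem irreducible_C_mul_add_C_of_eisenstein {R : Type*} [CommRing R] [IsDomain R] {P : Ideal R}
    (hP : P.IsPrime) {h g : R}
    (hh : h ∈ P) (hh2 : h ∉ P ^ 2) (hg : g ∉ P) {Q : R[X]} (hQ : Q.Monic)
    (hQdeg : 0 < Q.natDegree) (hprim : (C h * Q + C g).IsPrimitive) :
    Irreducible (C h * Q + C g) := by
  set A := C h * Q + C g
  have hA0_notMem : A.coeff 0 ∉ P := by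
    rw [coeff_C_mul_add_C, if_pos rfl]
    exact fun hmem => hg ((Ideal.add_mem_iff_right P (P.mul_mem_right _ hh)).mp hmem)
  have hAdeg : A.natDegree = Q.natDegree := by
    rw [natDegree_add_C, natDegree_C_mul (fun h0 => hh2 (by simp [h0]))]
  have hA0_ne : A.coeff 0 ≠ 0 := fun h0 => hA0_notMem (h0 ▸ zero_mem P)
  have hrev_deg : A.reverse.natDegree = Q.natDegree :=
    (natDegree_reverse_of_coeff_zero_ne_zero hA0_ne).trans hAdeg
  refine irreducible_of_irreducible_reverse hA0_ne
    (irreducible_of_eisenstein_criterion hP ?_ ?_ ?_ ?_ hprim.reverse)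
  · rwa [reverse_leadingCoeff, trailingCoeff, natTrailingDegree_eq_zero.mpr (Or.inr hA0_ne)]
  · intro k hk
    rw [coe_lt_degree, hrev_deg, ← hAdeg] at hk
    rw [coeff_reverse, revAt_le hk.le, coeff_C_mul_add_C, if_neg (by omega), add_zero]
    exact P.mul_mem_right _ hh
  · rwa [← natDegree_pos_iff_degree_pos, hrev_deg]
  · rw [coeff_zero_reverse, leadingCoeff, hAdeg, coeff_C_mul_add_C, if_neg hQdeg.ne',
      hQ.coeff_natDegree, mul_one, add_zero]
    exact hh2

end Polynomial

theorem stmt18_general {K : Type*} [Field K] (n : ℕ) (h g : Polynomial K)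
    (hcop : IsRelPrime h g)
    (hroot : ∃ α : AlgebraicClosure K,
      rootMultiplicity α (h.map (algebraMap K (AlgebraicClosure K))) = 1)
    (f : Fin n → Polynomial K)
    (hdeg : 0 < ∑ i, (f i).natDegree)
    (hprim : (Polynomial.C h * ∏ i, (Polynomial.X - Polynomial.C (f i)) +
      Polynomial.C g).IsPrimitive) :
    Irreducible ((Polynomial.C h * ∏ i, (Polynomial.X - Polynomial.C (f i)) +
        Polynomial.C g).map
      (Polynomial.mapRingHom (algebraMap K (AlgebraicClosure K)))) := by
  obtain ⟨α, hα⟩ := hroot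
  set φ := algebraMap K (AlgebraicClosure K)
  have hn : 0 < n := Nat.pos_of_ne_zero (by rintro rfl; simp at hdeg)
  have hh0 : h.map φ ≠ 0 := fun h0 => by simp [h0] at hα
  have hQ : (∏ i, (X - C ((f i).map φ))).Monic :=
    monic_prod_of_monic _ _ fun i _ => monic_X_sub_C _
  have hQdeg : 0 < (∏ i, (X - C ((f i).map φ))).natDegree := by
    rw [natDegree_prod_of_monic _ _ fun i _ => monic_X_sub_C _]
    simpa using hn
  have hdvd : X - C α ∣ h.map φ := by simpa [hα] using pow_rootMultiplicity_dvd (h.map φ) α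
  have hndvd : ¬(X - C α) ^ 2 ∣ h.map φ := by
    simpa [hα] using pow_rootMultiplicity_not_dvd hh0 α
  have hgndvd : ¬X - C α ∣ g.map φ := fun hg =>
    not_isUnit_X_sub_C α ((hcop.isCoprime.map (mapRingHom φ)).isUnit_of_dvd' hdvd hg)
  have hmap : (C h * ∏ i, (X - C (f i)) + C g).map (mapRingHom φ) =
      C (h.map φ) * ∏ i, (X - C ((f i).map φ)) + C (g.map φ) := by
    simp [Polynomial.map_prod]
  have hprime : (Ideal.span {X - C α}).IsPrime :=
    (Ideal.span_singleton_prime (X_sub_C_ne_zero α)).mpr (prime_X_sub_C α)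
  rw [hmap]
  refine irreducible_C_mul_add_C_of_eisenstein hprime ?_ ?_ ?_ hQ hQdeg
    (hmap ▸ hprim.map (mapRingHom φ))
  · exact Ideal.mem_span_singleton.mpr hdvd
  · rwa [Ideal.span_singleton_pow, Ideal.mem_span_singleton]
  · rwa [Ideal.mem_span_singleton]

/-- Corollary 3.6 a): if `gcd(h,g) = 1`, `h` has a simple root in the algebraic
closure, and `f₁,…,fₙ` are distinct with `Σ deg fᵢ > 0`, then
`F(x,y) = h(x)·∏(y - fᵢ(x)) + g(x)`, provided it is primitive in `y`, is
absolutely irreducible. -/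
theorem stmt18 {K : Type*} [Field K] (n : ℕ) (h g : Polynomial K)
    (hcop : IsRelPrime h g)
    (hroot : ∃ α : AlgebraicClosure K,
      rootMultiplicity α (h.map (algebraMap K (AlgebraicClosure K))) = 1)
    (f : Fin n → Polynomial K) (hinj : Function.Injective f)
    (hdeg : 0 < ∑ i, (f i).natDegree)
    (hprim : (Polynomial.C h * ∏ i, (Polynomial.X - Polynomial.C (f i)) +
      Polynomial.C g).IsPrimitive) :
    Irreducible ((Polynomial.C h * ∏ i, (Polynomial.X - Polynomial.C (f i)) +
        Polynomial.C g).map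
      (Polynomial.mapRingHom (algebraMap K (AlgebraicClosure K)))) :=
  stmt18_general n h g hcop hroot f hdeg hprim
end

section
/- Let K be a field, r ∈ K with r ≠ 0, h(x) ∈ K[x] nonzero, and f₁,...,fₙ ∈ K[x] distinct polynomials with Σᵢ deg fᵢ > 0 such that fₙ(x) − fᵢ(x) is non-constant for all i = 1,...,n−1. Then F(x,y) = h(x)·∏ᵢ₌₁ⁿ(y − fᵢ(x)) + r is absolutely irreducible. -/
open Polynomial

/-!
Over a domain `R`, let `P = h · ∏ᵢ (Y - gᵢ) + r` with `r` a unit. If `P = A · B` in `R[x][Y]`,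
then `A(gᵢ) · B(gᵢ) = r` for every `i`, so every `A(gᵢ)` is a unit of `R[x]`, i.e. a constant `cᵢ`.
Since `gᵢ₀ - gᵢ` divides `A(gᵢ₀) - A(gᵢ) = cᵢ₀ - cᵢ` and is non-constant, all `cᵢ` agree, so
`A - c` has the `n + 1` distinct roots `gᵢ`. As `deg P = n + 1`, one of `A`, `B` has degree `≤ n`,
and that factor is the constant unit `c`.
-/

namespace Polynomial

theorem natDegree_C_mul_prod_X_sub_C_add_C {S ι : Type*} [CommRing S] [IsDomain S] [Fintype ι]
    {a : S} (ha : a ≠ 0) (g : ι → S) (c : S) :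
    (C a * ∏ i, (X - C (g i)) + C c).natDegree = Fintype.card ι := by
  rw [natDegree_add_C, natDegree_C_mul ha, natDegree_finsetProd_X_sub_C_eq_card, Finset.card_univ]

theorem eval_C_mul_prod_X_sub_C_add_C {S ι : Type*} [CommRing S] [Fintype ι]
    (a : S) (g : ι → S) (c : S) (i : ι) :
    (C a * ∏ j, (X - C (g j)) + C c).eval (g i) = c := by
  simp [eval_prod, Finset.prod_eq_zero (Finset.mem_univ i)]

variable {R ι : Type*} [CommRing R] [IsDomain R] [Fintype ι]

theorem eq_of_eval_eq_C_of_natDegree_sub_pos {A : R[X][X]} {p q : R[X]}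
    (hpq : 0 < (p - q).natDegree) {a b : R} (ha : A.eval p = C a) (hb : A.eval q = C b) :
    a = b := by
  by_contra hne
  have hdvd : p - q ∣ C (a - b) := by simpa [C_sub, ha, hb] using sub_dvd_eval_sub p q A
  have := natDegree_le_of_dvd hdvd (C_ne_zero.mpr (sub_ne_zero.mpr hne))
  rw [natDegree_C] at this
  omega

theorem isUnit_of_isUnit_eval_of_natDegree_lt {A : R[X][X]} {g : ι → R[X]}
    (hg : Function.Injective g) {i₀ : ι} (hnc : ∀ i ≠ i₀, 0 < (g i₀ - g i).natDegree)
    (hA : ∀ i, IsUnit (A.eval (g i))) (hdeg : A.natDegree < Fintype.card ι) : IsUnit A := by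
  choose c hc_unit hc using fun i => isUnit_iff.mp (hA i)
  have hconst : ∀ i, c i = c i₀ := by
    intro i
    rcases eq_or_ne i i₀ with rfl | hi
    · rfl
    · exact (eq_of_eval_eq_C_of_natDegree_sub_pos (hnc i hi) (hc i₀).symm (hc i).symm).symm
  have hA_eq : A = C (C (c i₀)) := by
    rw [← sub_eq_zero]
    refine eq_zero_of_natDegree_lt_card_of_eval_eq_zero _ hg (fun i => ?_)
      (by rwa [natDegree_sub_C])
    rw [eval_sub, eval_C, ← hc, hconst, sub_self]
  rw [hA_eq]
  exact isUnit_C.mpr (isUnit_C.mpr (hc_unit i₀))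

theorem irreducible_C_mul_prod_X_sub_C_add_C {h : R[X]} (hh : h ≠ 0) {r : R} (hr : IsUnit r)
    {g : ι → R[X]} (hg : Function.Injective g) (i₀ : ι)
    (hnc : ∀ i ≠ i₀, 0 < (g i₀ - g i).natDegree) :
    Irreducible (C h * ∏ i, (X - C (g i)) + C (C r)) := by
  have hP_deg := natDegree_C_mul_prod_X_sub_C_add_C hh g (C r)
  have hcard : 0 < Fintype.card ι := Fintype.card_pos_iff.mpr ⟨i₀⟩
  refine ⟨not_isUnit_of_natDegree_pos _ (hP_deg ▸ hcard), fun A B hAB => ?_⟩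
  have hP0 := ne_zero_of_natDegree_gt (hP_deg ▸ hcard)
  rw [hAB] at hP0
  have hAB_deg : A.natDegree + B.natDegree = Fintype.card ι := by
    rw [← natDegree_mul (left_ne_zero_of_mul hP0) (right_ne_zero_of_mul hP0), ← hAB, hP_deg]
  have hAB_eval : ∀ i, IsUnit (A.eval (g i) * B.eval (g i)) := fun i => by
    rw [← eval_mul, ← hAB, eval_C_mul_prod_X_sub_C_add_C]
    exact isUnit_C.mpr hr
  by_cases hA : A.natDegree < Fintype.card ι
  · exact .inl <| isUnit_of_isUnit_eval_of_natDegree_lt hg hnc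
      (fun i => isUnit_of_mul_isUnit_left (hAB_eval i)) hA
  · exact .inr <| isUnit_of_isUnit_eval_of_natDegree_lt hg hnc
      (fun i => isUnit_of_mul_isUnit_right (hAB_eval i)) (by omega)

end Polynomial

theorem stmt19_general {K : Type*} [Field K] (n : ℕ) (h : Polynomial K) (hh : h ≠ 0)
    (r : K) (hr : r ≠ 0)
    (f : Fin (n + 1) → Polynomial K) (hinj : Function.Injective f)
    (hnc : ∀ i : Fin (n + 1), i ≠ Fin.last n → 0 < (f (Fin.last n) - f i).natDegree) :
    Irreducible ((Polynomial.C h * ∏ i, (Polynomial.X - Polynomial.C (f i)) +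
        Polynomial.C (Polynomial.C r)).map
      (Polynomial.mapRingHom (algebraMap K (AlgebraicClosure K)))) := by
  set σ := algebraMap K (AlgebraicClosure K)
  have hmap : (C h * ∏ i, (X - C (f i)) + C (C r)).map (mapRingHom σ) =
      C (h.map σ) * ∏ i, (X - C ((f i).map σ)) + C (C (σ r)) := by
    simp [Polynomial.map_prod]
  rw [hmap]
  refine irreducible_C_mul_prod_X_sub_C_add_C ((Polynomial.map_ne_zero_iff σ.injective).mpr hh)
    ((map_ne_zero σ).mpr hr).isUnit ((map_injective σ σ.injective).comp hinj) (Fin.last n)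
    fun i hi => ?_
  rw [← Polynomial.map_sub, natDegree_map_eq_of_injective σ.injective]
  exact hnc i hi

/-- Corollary 3.6 b): if `r ≠ 0`, `h ≠ 0`, and `f₁,…,fₙ` are distinct with
`Σ deg fᵢ > 0` and `fₙ - fᵢ` non-constant for all `i < n`, then
`F(x,y) = h(x)·∏(y - fᵢ(x)) + r` is absolutely irreducible.
Here the polynomials are indexed by `Fin (n + 1)` and `fₙ` is `f (Fin.last n)`. -/
theorem stmt19 {K : Type*} [Field K] (n : ℕ) (h : Polynomial K) (hh : h ≠ 0)
    (r : K) (hr : r ≠ 0)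
    (f : Fin (n + 1) → Polynomial K) (hinj : Function.Injective f)
    (hdeg : 0 < ∑ i, (f i).natDegree)
    (hnc : ∀ i : Fin (n + 1), i ≠ Fin.last n → 0 < (f (Fin.last n) - f i).natDegree) :
    Irreducible ((Polynomial.C h * ∏ i, (Polynomial.X - Polynomial.C (f i)) +
        Polynomial.C (Polynomial.C r)).map
      (Polynomial.mapRingHom (algebraMap K (AlgebraicClosure K)))) :=
  stmt19_general n h hh r hr f hinj hnc
end
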